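/- arXiv:2307.10671 — 2 statements merged into one kernel-verified Lean document; each statement's English description precedes it below -/
import Mathlib

section
/- Let N ≥ 1, let A ⊆ ℝ^N be not relatively compact (equivalently, unbounded), and let α : [0, ∞) → [1, ∞) be a continuous increasing function. Let M_α := {f ∈ X : f has growth α through A}. Then M_α is pointwise 𝔠-spaceable in X: for every f ∈ M_α there exists a linear subspace W of the space of functions ℝ^N → ℝ such that dim(W) = 𝔠, f ∈ W, W ⊆ M_α ∪ {0}, and whenever a sequence (H_l)_{l∈ℕ} in W converges pointwise on ℝ^N to a function h with h ≠ 0, the function h has growth α through A. -/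
open MeasureTheory Filter Topology

noncomputable section

/-- Euclidean space `ℝ^N`. -/
abbrev RN (N : ℕ) := EuclideanSpace ℝ (Fin N)

/-- The space `X = C^∞(ℝ^N) ∩ ⋂_{p ∈ [1,∞)} L^p(ℝ^N)` of infinitely differentiable
functions that are `p`-integrable for every real `p ≥ 1`. -/
def SmoothIntegrable (N : ℕ) : Set (RN N → ℝ) :=
  {f | ContDiff ℝ (⊤ : ℕ∞) f ∧
       ∀ p : ℝ, 1 ≤ p → MemLp f (ENNReal.ofReal p) volume}

/-- `f` is unbounded on `A`, i.e. `sup_{x ∈ A} |f x| = +∞`. -/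
def UnboundedOn {N : ℕ} (A : Set (RN N)) (f : RN N → ℝ) : Prop :=
  ∀ C : ℝ, ∃ x ∈ A, C < |f x|

/-- `nBC∞I(A) = {f ∈ X : f is unbounded on A}`. -/
def nBCI {N : ℕ} (A : Set (RN N)) : Set (RN N → ℝ) :=
  {f | f ∈ SmoothIntegrable N ∧ UnboundedOn A f}

/-- `f` has growth `α` through `A`:
`limsup_{x ∈ A, ‖x‖ → ∞} |f x| / α ‖x‖ = +∞`. -/
def HasGrowth {N : ℕ} (A : Set (RN N)) (α : ℝ → ℝ) (f : RN N → ℝ) : Prop :=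
  ∀ C : ℝ, 0 < C → ∀ R : ℝ, 0 < R → ∃ x ∈ A, R < ‖x‖ ∧ C * α ‖x‖ < |f x|

/-!
Fix `y` with `f y ≠ 0` and points `z k ∈ A`, pairwise more than `2` apart and escaping to infinity
beyond `‖y‖`. Around each `z k` put a smooth bump `φ k` of height one whose support is so small
that the weight `a k = (k + 1) (|f (z k)| + α ‖z k‖)` costs nothing in any `L^p` norm. The map
`S (c, b) = c f + ∑ₖ a k b (n k) φ k`, with `n k` the first component of `Nat.unpair k`, is
linear; evaluating at `y` and at the centres gives a continuous left inverse, so `S` is injective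
and its range is closed under pointwise limits. Every nonzero `S (c, b)` has growth `α`: for
`b = 0` it is a multiple of `f`, and if `b n ≠ 0` its values at the infinitely many centres
`z k` with `n k = n` beat any multiple of `α`. Finally `W` is the span of `f` and of the
`S (0, (t ^ n)ₙ)` for `0 < t < 1`, a linearly independent family of cardinality `𝔠`.
-/

open Set Metric Function Cardinal Submodule
open scoped ENNReal

theorem exists_radius_measure_ball_lt {X : Type*} [MetricSpace X] [ProperSpace X]
    [MeasurableSpace X] [OpensMeasurableSpace X] (μ : Measure X) [IsFiniteMeasureOnCompacts μ]
    [NullSingletonClass μ] (x : X) {ε : ℝ≥0∞} (hε : 0 < ε) :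
    ∃ r ∈ Ioc (0 : ℝ) 1, μ (ball x r) < ε := by
  have h := tendsto_measure_thickening_of_isClosed (μ := μ) (s := {x})
    ⟨1, one_pos, by simpa only [thickening_singleton] using measure_ball_lt_top.ne⟩
    isClosed_singleton
  simp only [thickening_singleton, measure_singleton] at h
  obtain ⟨r, hμ, hr⟩ := ((h.eventually (gt_mem_nhds hε)).and (Ioc_mem_nhdsGT one_pos)).exists
  exact ⟨r, hr, hμ⟩

theorem locallyFinite_ball_of_tendsto_norm {E : Type*} [SeminormedAddCommGroup E]
    {z : ℕ → E} {r : ℕ → ℝ} (hr : ∀ k, r k ≤ 1) (hz : Tendsto (fun k => ‖z k‖) atTop atTop) :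
    LocallyFinite fun k => ball (z k) (r k) := by
  intro x
  refine ⟨ball x 1, ball_mem_nhds x one_pos, ?_⟩
  have hfin : {k | ¬ ‖x‖ + 2 ≤ ‖z k‖}.Finite :=
    eventually_cofinite.1 (Nat.cofinite_eq_atTop ▸ hz.eventually_ge_atTop _)
  refine hfin.subset fun k ⟨w, hwk, hwx⟩ => not_le.2 ?_
  calc ‖z k‖ ≤ ‖x‖ + dist (z k) x := by
        rw [dist_eq_norm]; linarith [norm_sub_norm_le (z k) x]
    _ ≤ ‖x‖ + (dist w (z k) + dist w x) := by gcongr; exact dist_triangle_left _ _ _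
    _ < ‖x‖ + 2 := by linarith [mem_ball.1 hwk, mem_ball.1 hwx, hr k]

theorem exists_seq_mem_two_lt_dist {E : Type*} [SeminormedAddCommGroup E] {A : Set E}
    (hA : ∀ R, ∃ x ∈ A, R < ‖x‖) (R₀ : ℝ) :
    ∃ z : ℕ → E, (∀ k, z k ∈ A) ∧ (∀ k, R₀ + k < ‖z k‖) ∧
      Pairwise fun j k => 2 < dist (z j) (z k) := by
  choose g hgA hg using hA
  let z : ℕ → E := fun k => Nat.rec (g R₀) (fun _ x => g (‖x‖ + 2)) k
  have hstep : ∀ k, ‖z k‖ + 2 < ‖z (k + 1)‖ := fun k => hg _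
  have hmono : Monotone fun k => ‖z k‖ := monotone_nat_of_le_succ fun k => by linarith [hstep k]
  have hsep : ∀ j k, j < k → 2 < dist (z j) (z k) := fun j k hjk =>
    calc 2 < ‖z k‖ - ‖z j‖ := by linarith [hstep j, hmono (Nat.succ_le_of_lt hjk)]
      _ ≤ dist (z j) (z k) := by rw [dist_comm, dist_eq_norm]; exact norm_sub_norm_le _ _
  refine ⟨z, fun k => by cases k <;> exact hgA _, fun k => ?_, fun j k hjk => ?_⟩
  · induction k with
    | zero => simpa [z] using hg R₀
    | succ k ih => push_cast; linarith [hstep k]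
  · rcases hjk.lt_or_gt with h | h
    · exact hsep j k h
    · rw [dist_comm]; exact hsep k j h

theorem summable_rpow_div_pow {a : ℕ → ℝ} (ha : ∀ k, 0 ≤ a k) {p : ℝ} (hp : 0 ≤ p) :
    Summable fun k => a k ^ p / (2 * (1 + a k)) ^ k := by
  refine summable_geometric_two.of_norm_bounded_eventually_nat ?_
  filter_upwards [eventually_ge_atTop ⌈p⌉₊] with k hk
  have h1 : 0 < 1 + a k := by linarith [ha k]
  have hpow : a k ^ p ≤ (1 + a k) ^ k :=
    calc a k ^ p ≤ (1 + a k) ^ p := by gcongr; exacts [ha k, by linarith]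
      _ ≤ (1 + a k) ^ (k : ℝ) :=
        Real.rpow_le_rpow_of_exponent_le (by linarith [ha k])
          ((Nat.le_ceil p).trans (by exact_mod_cast hk))
      _ = (1 + a k) ^ k := Real.rpow_natCast _ _
  rw [Real.norm_of_nonneg (div_nonneg (Real.rpow_nonneg (ha k) p) (by positivity)), mul_pow,
    div_le_iff₀ (by positivity)]
  calc a k ^ p ≤ (1 + a k) ^ k := hpow
    _ = (1 / 2) ^ k * (2 ^ k * (1 + a k) ^ k) := by rw [← mul_assoc, ← mul_pow]; norm_num

theorem linearIndependent_pow_seq (K : Type*) [Field K] :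
    LinearIndependent K fun t : K => fun n : ℕ => t ^ n :=
  (linearIndependent_monoidHom (Multiplicative ℕ) K).comp (powersHom K) fun s t hst => by
    simpa using DFunLike.congr_fun hst (Multiplicative.ofAdd 1)

universe u in
theorem rank_span_insert_range {R : Type*} {M ι : Type u} [Ring R] [StrongRankCondition R]
    [AddCommGroup M] [Module R M] {v : ι → M} (hv : LinearIndependent R v) (hι : ℵ₀ ≤ #ι)
    (x : M) : Module.rank R (span R (insert x (range v))) = #ι := by
  have := nontrivial_of_invariantBasisNumber R
  rw [← mk_range_eq v hv.injective] at hι ⊢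
  refine le_antisymm ((rank_span_le _).trans (mk_insert_le.trans ?_)) ?_
  · rw [add_one_eq hι]
  · exact (rank_span hv).symm.le.trans (rank_mono (span_mono (subset_insert x _)))

section BumpFamily

variable {E : Type*} [NormedAddCommGroup E]

structure BumpFamily (z : ℕ → E) where
  bump : ∀ k, ContDiffBump (z k)
  pairwise_disjoint : Pairwise (Disjoint on fun k => ball (z k) (bump k).rOut)
  locallyFinite : LocallyFinite fun k => ball (z k) (bump k).rOut

namespace BumpFamily

variable [NormedSpace ℝ E] [HasContDiffBump E] {z : ℕ → E} (B : BumpFamily z)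

theorem locallyFinite_support (c : ℕ → ℝ) :
    LocallyFinite fun k => support fun x => c k * B.bump k x :=
  B.locallyFinite.subset fun k =>
    (support_mul_subset_right _ _).trans (B.bump k).support_eq.subset

theorem finite_support_apply (c : ℕ → ℝ) (x : E) :
    (support fun k => c k * B.bump k x).Finite :=
  (B.locallyFinite_support c).point_finite x

def series : (ℕ → ℝ) →ₗ[ℝ] E → ℝ where
  toFun c x := ∑ᶠ k, c k * B.bump k x
  map_add' c d := funext fun x => by
    simp only [Pi.add_apply, add_mul]
    exact finsum_add_distrib (B.finite_support_apply c x) (B.finite_support_apply d x)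
  map_smul' r c := funext fun x => by
    simp only [Pi.smul_apply, smul_eq_mul, RingHom.id_apply, mul_assoc]
    exact (mul_finsum _ r).symm

theorem bump_apply_eq_zero_of_mem {j k : ℕ} (hkj : k ≠ j) {x : E}
    (hx : x ∈ ball (z j) (B.bump j).rOut) : B.bump k x = 0 := by
  rw [← notMem_support, (B.bump k).support_eq]
  exact (B.pairwise_disjoint hkj).notMem_of_mem_right hx

theorem series_apply_of_mem (c : ℕ → ℝ) {j : ℕ} {x : E} (hx : x ∈ ball (z j) (B.bump j).rOut) :
    B.series c x = c j * B.bump j x :=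
  finsum_eq_single _ j fun k hkj => by rw [B.bump_apply_eq_zero_of_mem hkj hx, mul_zero]

theorem series_apply_self (c : ℕ → ℝ) (j : ℕ) : B.series c (z j) = c j := by
  rw [B.series_apply_of_mem c (mem_ball_self (B.bump j).rOut_pos),
    (B.bump j).one_of_mem_closedBall (mem_closedBall_self (B.bump j).rIn_pos.le), mul_one]

theorem series_apply_of_forall_notMem (c : ℕ → ℝ) {x : E}
    (hx : ∀ k, x ∉ ball (z k) (B.bump k).rOut) : B.series c x = 0 :=
  finsum_eq_zero_of_forall_eq_zero fun k => by
    rw [notMem_support.1 fun h => hx k ((B.bump k).support_eq ▸ h), mul_zero]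

theorem contDiff_series (c : ℕ → ℝ) {n : ℕ∞} : ContDiff ℝ n (B.series c) := by
  refine contDiff_iff_contDiffAt.2 fun x => ?_
  obtain ⟨s, hs⟩ := finsum_eventually_eq_sum (B.locallyFinite_support c) x
  exact (ContDiff.contDiffAt (ContDiff.sum fun k _ =>
    contDiff_const.mul (B.bump k).contDiff)).congr_of_eventuallyEq hs

theorem series_apply_eq_sum (c : ℕ → ℝ) (x : E) :
    B.series c x = ∑ k ∈ (B.locallyFinite.point_finite x).toFinset, c k * B.bump k x :=
  finsum_eq_sum_of_support_subset _ fun k hk => by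
    rw [Finite.coe_toFinset, mem_ofPred_eq, ← (B.bump k).support_eq]
    exact right_ne_zero_of_mul hk

theorem continuous_series_apply (x : E) : Continuous fun c => B.series c x := by
  simp only [series_apply_eq_sum]
  exact continuous_finsetSum _ fun k _ => (continuous_apply k).mul continuous_const

theorem enorm_series_rpow_le (c : ℕ → ℝ) {p : ℝ} (hp : 0 < p) (x : E) :
    ‖B.series c x‖ₑ ^ p ≤
      ∑' k, (ball (z k) (B.bump k).rOut).indicator (fun _ => ‖c k‖ₑ ^ p) x := by
  by_cases hx : ∃ k, x ∈ ball (z k) (B.bump k).rOut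
  · obtain ⟨k, hk⟩ := hx
    refine le_trans ?_ (ENNReal.le_tsum k)
    rw [indicator_of_mem hk, B.series_apply_of_mem c hk, enorm_mul]
    have hφ : ‖B.bump k x‖ₑ ≤ 1 := by
      rw [Real.enorm_of_nonneg (B.bump k).nonneg]
      exact ENNReal.ofReal_le_one.2 (B.bump k).le_one
    gcongr
    exact mul_le_of_le_one_right' hφ
  · push Not at hx
    rw [B.series_apply_of_forall_notMem c hx, enorm_zero, ENNReal.zero_rpow_of_pos hp]
    exact zero_le

theorem memLp_series [MeasurableSpace E] [BorelSpace E] (μ : Measure E) (c : ℕ → ℝ) {p : ℝ}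
    (hp : 0 < p) (h : ∑' k, ‖c k‖ₑ ^ p * μ (ball (z k) (B.bump k).rOut) ≠ ∞) :
    MemLp (B.series c) (ENNReal.ofReal p) μ := by
  refine ⟨(B.contDiff_series c (n := 0)).continuous.aestronglyMeasurable, ?_⟩
  rw [eLpNorm_lt_top_iff_lintegral_rpow_enorm_lt_top (by simpa using hp) ENNReal.ofReal_ne_top,
    ENNReal.toReal_ofReal hp.le]
  calc ∫⁻ x, ‖B.series c x‖ₑ ^ p ∂μ
      ≤ ∫⁻ x, ∑' k, (ball (z k) (B.bump k).rOut).indicator (fun _ => ‖c k‖ₑ ^ p) x ∂μ :=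
        lintegral_mono (B.enorm_series_rpow_le c hp)
    _ = ∑' k, ‖c k‖ₑ ^ p * μ (ball (z k) (B.bump k).rOut) := by
        rw [lintegral_tsum fun k => (measurable_const.indicator measurableSet_ball).aemeasurable]
        simp only [lintegral_indicator_const measurableSet_ball]
    _ < ∞ := h.lt_top

section Perturb

variable (f : E → ℝ) (a : ℕ → ℝ)

def perturb : ℝ × (ℕ → ℝ) →ₗ[ℝ] E → ℝ :=
  (LinearMap.toSpanSingleton ℝ _ f).coprod
    (B.series ∘ₗ LinearMap.mulLeft ℝ a ∘ₗ LinearMap.funLeft ℝ ℝ fun k => k.unpair.1)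

theorem perturb_apply (c : ℝ) (b : ℕ → ℝ) :
    B.perturb f a (c, b) = c • f + B.series fun k => a k * b k.unpair.1 := rfl

theorem perturb_apply_zero (c : ℝ) : B.perturb f a (c, 0) = c • f := by
  rw [perturb_apply]
  simp only [Pi.zero_apply, mul_zero, ← Pi.zero_def, map_zero, add_zero]

theorem perturb_apply_self (c : ℝ) (b : ℕ → ℝ) (k : ℕ) :
    B.perturb f a (c, b) (z k) = c * f (z k) + a k * b k.unpair.1 := by
  simp [perturb_apply, series_apply_self]

theorem perturb_apply_of_forall_notMem (c : ℝ) (b : ℕ → ℝ) {y : E}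
    (hy : ∀ k, y ∉ ball (z k) (B.bump k).rOut) : B.perturb f a (c, b) y = c * f y := by
  simp [perturb_apply, B.series_apply_of_forall_notMem _ hy]

theorem continuous_perturb : Continuous (B.perturb f a) := by
  refine continuous_pi fun x => ?_
  change Continuous fun v : ℝ × (ℕ → ℝ) => v.1 * f x + B.series (fun k => a k * v.2 k.unpair.1) x
  exact (continuous_fst.mul continuous_const).add <| (B.continuous_series_apply x).comp <|
      continuous_pi fun k => continuous_const.mul ((continuous_apply _).comp continuous_snd)

theorem isClosedEmbedding_perturb {y : E} (hy : ∀ k, y ∉ ball (z k) (B.bump k).rOut)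
    (hfy : f y ≠ 0) (ha : ∀ k, a k ≠ 0) : IsClosedEmbedding (B.perturb f a) := by
  let L : (E → ℝ) → ℝ × (ℕ → ℝ) := fun g =>
    (g y / f y, fun n => (g (z (n.pair 0)) - g y / f y * f (z (n.pair 0))) / a (n.pair 0))
  refine LeftInverse.isClosedEmbedding (f := L) (fun ⟨c, b⟩ => ?_) ?_
    (B.continuous_perturb f a)
  · simp only [L, B.perturb_apply_self, B.perturb_apply_of_forall_notMem _ _ _ _ hy,
      Nat.unpair_pair]
    ext n
    · field_simp
    · field_simp [ha]
      ring
  · fun_prop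

end Perturb

end BumpFamily

theorem exists_bumpFamily [ProperSpace E] [MeasurableSpace E] [BorelSpace E] (μ : Measure E)
    [IsFiniteMeasureOnCompacts μ] [NullSingletonClass μ] {z : ℕ → E} (hsep : Pairwise fun j k => 2 < dist (z j) (z k))
    (hz : Tendsto (fun k => ‖z k‖) atTop atTop) {ε : ℕ → ℝ≥0∞} (hε : ∀ k, 0 < ε k) :
    ∃ B : BumpFamily z, ∀ k, (B.bump k).rOut ≤ 1 ∧ μ (ball (z k) (B.bump k).rOut) < ε k := by
  choose r hr hμ using fun k => exists_radius_measure_ball_lt μ (z k) (hε k)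
  refine ⟨⟨fun k => ⟨r k / 2, r k, half_pos (hr k).1, half_lt_self (hr k).1⟩,
    fun j k hjk => ball_disjoint_ball ?_,
    locallyFinite_ball_of_tendsto_norm (fun k => (hr k).2) hz⟩,
    fun k => ⟨(hr k).2, hμ k⟩⟩
  linarith [hsep hjk, (hr j).2, (hr k).2]

end BumpFamily

section Growth

variable {N : ℕ} {A : Set (RN N)} {α : ℝ → ℝ} {f : RN N → ℝ}

theorem HasGrowth.exists_mem_lt_norm (hf : HasGrowth A α f) (R : ℝ) : ∃ x ∈ A, R < ‖x‖ := by
  obtain ⟨x, hxA, hx, -⟩ := hf 1 one_pos (max R 1) (by positivity)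
  exact ⟨x, hxA, (le_max_left R 1).trans_lt hx⟩

theorem HasGrowth.const_smul (hf : HasGrowth A α f) {c : ℝ} (hc : c ≠ 0) :
    HasGrowth A α (c • f) := by
  intro C hC R hR
  obtain ⟨x, hxA, hxR, hx⟩ := hf (C / |c|) (div_pos hC (abs_pos.2 hc)) R hR
  refine ⟨x, hxA, hxR, ?_⟩
  rw [Pi.smul_apply, smul_eq_mul, abs_mul]
  calc C * α ‖x‖ = |c| * (C / |c| * α ‖x‖) := by field_simp
    _ < |c| * |f x| := mul_lt_mul_of_pos_left hx (abs_pos.2 hc)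

theorem hasGrowth_of_apply_eq {g : RN N → ℝ} {z : ℕ → RN N} {a : ℕ → ℝ} (hzA : ∀ k, z k ∈ A)
    (hz : ∀ k : ℕ, (k : ℝ) < ‖z k‖) (hα : ∀ k, 0 < α ‖z k‖)
    (ha : ∀ k, (k + 1) * (|f (z k)| + α ‖z k‖) ≤ a k) {c β : ℝ} (hβ : β ≠ 0)
    (hg : ∀ k, g (z k) = c * f (z k) + β * a k) : HasGrowth A α g := by
  intro C hC R hR
  have hβ' : 0 < |β| := abs_pos.2 hβ
  obtain ⟨k, hk⟩ := exists_nat_gt (max R ((|c| + C) / |β|))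
  have hkβ : |c| + C < |β| * (k + 1) := by
    have := (le_max_right _ _).trans_lt hk
    rw [div_lt_iff₀ hβ'] at this
    linarith
  refine ⟨z k, hzA k, ((le_max_left _ _).trans_lt hk).trans (hz k), ?_⟩
  have hF := abs_nonneg (f (z k))
  have hβa : |β| * ((k + 1) * (|f (z k)| + α ‖z k‖)) ≤ |β * a k| := by
    have ha0 := (mul_nonneg (by positivity) (add_nonneg hF (hα k).le)).trans (ha k)
    rw [abs_mul, abs_of_nonneg ha0]
    exact mul_le_mul_of_nonneg_left (ha k) hβ'.le
  have hg' : |β * a k| ≤ |g (z k)| + |c| * |f (z k)| :=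
    calc |β * a k| = |(c * f (z k) + β * a k) - c * f (z k)| := by ring_nf
      _ ≤ |g (z k)| + |c| * |f (z k)| := by rw [hg, ← abs_mul]; exact abs_sub _ _
  nlinarith [abs_nonneg c, mul_nonneg (by linarith : 0 ≤ |β| * (k + 1) - |c|) hF,
    mul_pos (by linarith [abs_nonneg c] : 0 < |β| * (k + 1) - C) (hα k)]

end Growth

def smoothIntegrableSubmodule (N : ℕ) : Submodule ℝ (RN N → ℝ) where
  carrier := SmoothIntegrable N
  add_mem' hf hg := ⟨hf.1.add hg.1, fun p hp => (hf.2 p hp).add (hg.2 p hp)⟩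
  zero_mem' := ⟨contDiff_const, fun _ _ => MemLp.zero⟩
  smul_mem' c _ hf := ⟨hf.1.const_smul c, fun p hp => (hf.2 p hp).const_smul c⟩

namespace BumpFamily

variable {N : ℕ} {z : ℕ → RN N} (B : BumpFamily z)

theorem perturb_mem_smoothIntegrable {f : RN N → ℝ} (hf : f ∈ SmoothIntegrable N) {a δ : ℕ → ℝ}
    (ha : ∀ k, 0 ≤ a k) (hδ : ∀ k, 0 ≤ δ k)
    (hB : ∀ k, volume (ball (z k) (B.bump k).rOut) ≤ ENNReal.ofReal (δ k))
    (hsum : ∀ p : ℝ, 1 ≤ p → Summable fun k => a k ^ p * δ k) (c : ℝ) {b : ℕ → ℝ}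
    (hb : ∀ n, |b n| ≤ 1) : B.perturb f a (c, b) ∈ SmoothIntegrable N := by
  refine (smoothIntegrableSubmodule N).add_mem ((smoothIntegrableSubmodule N).smul_mem c hf)
    ⟨B.contDiff_series _, fun p hp => B.memLp_series volume _ (by linarith) ?_⟩
  have hterm : ∀ k, ‖a k * b k.unpair.1‖ₑ ^ p * volume (ball (z k) (B.bump k).rOut) ≤
      ENNReal.ofReal (a k ^ p * δ k) := fun k => by
    rw [ENNReal.ofReal_mul (Real.rpow_nonneg (ha k) p),
      ← ENNReal.ofReal_rpow_of_nonneg (ha k) (by linarith), Real.enorm_eq_ofReal_abs]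
    gcongr
    · rw [abs_mul, abs_of_nonneg (ha k)]
      exact mul_le_of_le_one_right (ha k) (hb _)
    · exact hB k
  refine ne_top_of_le_ne_top ?_ (ENNReal.tsum_le_tsum hterm)
  rw [← ENNReal.ofReal_tsum_of_nonneg (fun k => mul_nonneg (Real.rpow_nonneg (ha k) p) (hδ k))
    (hsum p hp)]
  exact ENNReal.ofReal_ne_top

theorem hasGrowth_perturb {A : Set (RN N)} {α : ℝ → ℝ} {f : RN N → ℝ} (hf : HasGrowth A α f)
    {a : ℕ → ℝ} (hzA : ∀ k, z k ∈ A) (hz : ∀ k : ℕ, (k : ℝ) < ‖z k‖) (hα : ∀ k, 0 < α ‖z k‖)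
    (ha : ∀ k, (k + 1) * (|f (z k)| + α ‖z k‖) ≤ a k) {v : ℝ × (ℕ → ℝ)}
    (hv : B.perturb f a v ≠ 0) : HasGrowth A α (B.perturb f a v) := by
  obtain ⟨c, b⟩ := v
  by_cases hb : b = 0
  · subst hb
    rw [perturb_apply_zero] at hv ⊢
    exact hf.const_smul (left_ne_zero_of_smul hv)
  obtain ⟨n, hn⟩ := Function.ne_iff.1 hb
  refine hasGrowth_of_apply_eq (f := f) (z := fun m => z (n.pair m)) (a := fun m => a (n.pair m))
    (c := c) (fun m => hzA _) (fun m => ?_) (fun m => hα _) (fun m => ?_) hn (fun m => ?_)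
  · exact (Nat.cast_le.2 (Nat.right_le_pair n m)).trans_lt (hz _)
  · refine le_trans ?_ (ha _)
    gcongr
    · exact add_nonneg (abs_nonneg _) (hα _).le
    · exact Nat.right_le_pair n m
  · rw [perturb_apply_self, Nat.unpair_pair, mul_comm (a _)]

end BumpFamily

theorem exists_isClosedEmbedding_hasGrowth {N : ℕ} {A : Set (RN N)} {α : ℝ → ℝ}
    (hα : ∀ x ∈ Ici (0 : ℝ), 1 ≤ α x) {f : RN N → ℝ} (hfX : f ∈ SmoothIntegrable N)
    (hfG : HasGrowth A α f) :
    ∃ S : ℝ × (ℕ → ℝ) →ₗ[ℝ] RN N → ℝ, S (1, 0) = f ∧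
      (∀ b : ℕ → ℝ, (∀ n, |b n| ≤ 1) → S (0, b) ∈ SmoothIntegrable N) ∧
      IsClosedEmbedding S ∧ ∀ v, S v ≠ 0 → HasGrowth A α (S v) := by
  have hα1 : ∀ x : RN N, 1 ≤ α ‖x‖ := fun x => hα _ (norm_nonneg x)
  obtain ⟨y, -, -, hy⟩ := hfG 1 one_pos 1 one_pos
  have hfy : f y ≠ 0 := fun h => by rw [h, abs_zero] at hy; linarith [hα1 y]
  obtain ⟨z, hzA, hz, hsep⟩ := exists_seq_mem_two_lt_dist hfG.exists_mem_lt_norm (‖y‖ + 1)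
  have hz_norm : ∀ k : ℕ, (k : ℝ) < ‖z k‖ := fun k => by linarith [hz k, norm_nonneg y]
  have : Nontrivial (RN N) :=
    nontrivial_of_ne (z 0) 0 (norm_pos_iff.1 (by simpa using hz_norm 0))
  set a : ℕ → ℝ := fun k => (k + 1) * (|f (z k)| + α ‖z k‖)
  have ha : ∀ k, 0 < a k := fun k => by have := hα1 (z k); positivity
  set δ : ℕ → ℝ := fun k => ((2 * (1 + a k)) ^ k)⁻¹
  have hδ : ∀ k, 0 < δ k := fun k => by have := ha k; positivity
  obtain ⟨B, hB⟩ := exists_bumpFamily volume hsep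
    (tendsto_atTop_mono (fun k => (hz_norm k).le) tendsto_natCast_atTop_atTop)
    (fun k => ENNReal.ofReal_pos.2 (hδ k))
  have hy_notMem : ∀ k, y ∉ ball (z k) (B.bump k).rOut := fun k hk => by
    rw [mem_ball, dist_comm, dist_eq_norm] at hk
    linarith [norm_sub_norm_le (z k) y, hz k, (hB k).1, Nat.cast_nonneg (α := ℝ) k]
  refine ⟨B.perturb f a, by rw [B.perturb_apply_zero, one_smul],
    fun b hb => B.perturb_mem_smoothIntegrable hfX (fun k => (ha k).le) (fun k => (hδ k).le)
      (fun k => (hB k).2.le) (fun p hp => ?_) 0 hb,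
    B.isClosedEmbedding_perturb f a hy_notMem hfy fun k => (ha k).ne',
    fun v hv => B.hasGrowth_perturb hfG hzA hz_norm (fun k => by linarith [hα1 (z k)])
      (fun k => le_rfl) hv⟩
  simpa only [div_eq_mul_inv] using summable_rpow_div_pow (fun k => (ha k).le) (by linarith)

theorem growth_pointwise_continuum_spaceable_general (N : ℕ) (A : Set (RN N)) (α : ℝ → ℝ)
    (hα_ge : ∀ x ∈ Set.Ici (0 : ℝ), 1 ≤ α x) :
    ∀ f ∈ {f ∈ SmoothIntegrable N | HasGrowth A α f},
      ∃ W : Submodule ℝ (RN N → ℝ),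
        Module.rank ℝ W = Cardinal.continuum ∧ f ∈ W ∧
        (W : Set (RN N → ℝ)) ⊆ {f ∈ SmoothIntegrable N | HasGrowth A α f} ∪ {0} ∧
        ∀ H : ℕ → (RN N → ℝ), (∀ l : ℕ, H l ∈ W) →
          ∀ h : RN N → ℝ, (∀ x : RN N, Tendsto (fun l => H l x) atTop (𝓝 (h x))) →
            h ≠ 0 → HasGrowth A α h := by
  rintro f ⟨hfX, hfG⟩
  obtain ⟨S, hSf, hSX, hS, hSG⟩ := exists_isClosedEmbedding_hasGrowth hα_ge hfX hfG
  let v : Ioo (0 : ℝ) 1 → RN N → ℝ := fun t => S (0, fun n => (t : ℝ) ^ n)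
  have hv : LinearIndependent ℝ v :=
    ((linearIndependent_pow_seq ℝ).comp _ Subtype.val_injective).map' (S ∘ₗ LinearMap.inr ℝ ℝ _)
      (LinearMap.ker_eq_bot.2 (hS.injective.comp LinearMap.inr_injective))
  let W := span ℝ (insert f (range v))
  have hWS : W ≤ LinearMap.range S :=
    span_le.2 (insert_subset ⟨_, hSf⟩ (range_subset_iff.2 fun t => ⟨_, rfl⟩))
  have hWX : W ≤ smoothIntegrableSubmodule N :=
    span_le.2 (insert_subset hfX (range_subset_iff.2 fun t => hSX _ fun n => by
      rw [abs_pow, abs_of_pos t.2.1]; exact pow_le_one₀ t.2.1.le t.2.2.le))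
  refine ⟨W, ?_, subset_span (mem_insert f _), fun g hg => ?_, fun H hH h hlim hh => ?_⟩
  · rw [rank_span_insert_range hv (by rw [mk_Ioo_real zero_lt_one]; exact aleph0_le_continuum),
      mk_Ioo_real zero_lt_one]
  · obtain ⟨u, rfl⟩ := hWS hg
    by_cases h0 : S u = 0
    · exact Or.inr h0
    · exact Or.inl ⟨hWX hg, hSG u h0⟩
  · obtain ⟨u, rfl⟩ : h ∈ range S := hS.isClosed_range.mem_of_tendsto (tendsto_pi_nhds.2 hlim)
      (Eventually.of_forall fun l => hWS (hH l))
    exact hSG u hh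

/-- The set `M_α` of elements of `X` having growth `α` through `A` is
pointwise `𝔠`-spaceable in `X`. -/
theorem growth_pointwise_continuum_spaceable (N : ℕ) (hN : 1 ≤ N)
    (A : Set (RN N)) (hA : ¬ Bornology.IsBounded A)
    (α : ℝ → ℝ) (hα_cont : ContinuousOn α (Set.Ici 0))
    (hα_mono : MonotoneOn α (Set.Ici 0))
    (hα_ge : ∀ x ∈ Set.Ici (0 : ℝ), 1 ≤ α x) :
    ∀ f ∈ {f ∈ SmoothIntegrable N | HasGrowth A α f},
      ∃ W : Submodule ℝ (RN N → ℝ),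
        Module.rank ℝ W = Cardinal.continuum ∧ f ∈ W ∧
        (W : Set (RN N → ℝ)) ⊆ {f ∈ SmoothIntegrable N | HasGrowth A α f} ∪ {0} ∧
        ∀ H : ℕ → (RN N → ℝ), (∀ l : ℕ, H l ∈ W) →
          ∀ h : RN N → ℝ, (∀ x : RN N, Tendsto (fun l => H l x) atTop (𝓝 (h x))) →
            h ≠ 0 → HasGrowth A α h :=
  growth_pointwise_continuum_spaceable_general N A α hα_ge
end
end

section
/- Let E be a nonzero separable real Banach space and let p, with 1 < p < ∞, be fixed. Let M := {x ∈ ℓ_p(E) : x ∉ ℓ_q(E) for every q with 1 ≤ q < p}. Then M is infinitely pointwise 𝔠-dense lineable in ℓ_p(E): for every x ∈ M there exists a countable family (W_k)_{k∈ℕ} of linear subspaces of ℓ_p(E) such that for every k ∈ ℕ: dim(W_k) = 𝔠, x ∈ W_k ⊆ M ∪ {0}, W_k ∩ W_l = span{x} for every l ≠ k, and W_k is dense in ℓ_p(E) with respect to the ℓ_p-norm topology. -/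
open Filter Topology

noncomputable section

namespace Stmt15

open Set


variable {E : Type} [NormedAddCommGroup E] [NormedSpace ℝ E]

/-- comparison off a finite set -/
theorem summable_of_le_off_finite {f g : ℕ → ℝ} (T : Set ℕ) (hT : T.Finite)
    (hf : Summable f) (h0 : ∀ n, 0 ≤ g n) (hle : ∀ n ∉ T, g n ≤ f n) : Summable g := by
  have hind : Summable (T.indicator g) := by
    refine summable_of_ne_finset_zero (s := hT.toFinset) (fun n hn => ?_)
    exact Set.indicator_of_notMem (by simpa using hn) _
  refine Summable.of_nonneg_of_le h0 (fun n => ?_) ((hf.abs).add hind)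
  by_cases hn : n ∈ T
  · rw [Set.indicator_of_mem hn]
    exact le_add_of_nonneg_left (abs_nonneg _)
  · rw [Set.indicator_of_notMem hn, add_zero]
    exact (hle n hn).trans (le_abs_self _)

theorem mem_iff_summable {q : ℝ} (hq : 0 < q) (f : ℕ → E) :
    Memℓp f (ENNReal.ofReal q) ↔ Summable fun n => ‖f n‖ ^ q := by
  have ht : (ENNReal.ofReal q).toReal = q := ENNReal.toReal_ofReal hq.le
  rw [memℓp_gen_iff (by rw [ht]; exact hq), ht]

theorem support_sum_subset {ι : Type*} (J : Finset ι) (g : ι → ℕ → E) :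
    Function.support (∑ j ∈ J, g j) ⊆ ⋃ j ∈ (J : Set ι), Function.support (g j) := by
  intro n hn
  by_contra hc
  simp only [Set.mem_iUnion, Function.mem_support, not_exists, not_not] at hc
  exact hn (by simp only [Finset.sum_apply]; exact Finset.sum_eq_zero fun j hj => hc j hj)

theorem sum_extend {ι M : Type*} [DecidableEq ι] [AddCommMonoid M] [Module ℝ M]
    {G H : Finset ι} (hGH : G ⊆ H) (e : ι → ℝ) (v : ι → M) :
    ∑ r ∈ H, (if r ∈ G then e r else 0) • v r = ∑ r ∈ G, e r • v r := by
  rw [← Finset.sum_subset hGH (fun r _ hr => by rw [if_neg hr, zero_smul])]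
  exact Finset.sum_congr rfl fun r hr => by rw [if_pos hr]

theorem sum_reindex {ι M : Type*} [DecidableEq ι] [AddCommMonoid M] [Module ℝ M]
    (s : Finset ι) (f : ι → ℝ) (τ : ι → ℝ) (hτ : Set.InjOn τ ↑s) (v : ℝ → M) :
    ∑ i ∈ s, f i • v (τ i) =
      ∑ r ∈ s.image τ, (∑ i ∈ s.filter (fun i => τ i = r), f i) • v r := by
  classical
  rw [← Finset.sum_fiberwise_of_maps_to (g := τ) (t := s.image τ)
    (fun i hi => Finset.mem_image_of_mem τ hi) (fun i => f i • v (τ i))]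
  refine Finset.sum_congr rfl fun r hr => ?_
  rw [Finset.sum_smul]
  refine Finset.sum_congr rfl fun i hi => ?_
  rw [(Finset.mem_filter.1 hi).2]

theorem filter_eq_singleton {ι : Type*} [DecidableEq ι] {s : Finset ι} {τ : ι → ℝ}
    (hτ : Set.InjOn τ ↑s) {i : ι} (hi : i ∈ s) :
    s.filter (fun j => τ j = τ i) = {i} := by
  ext j
  simp only [Finset.mem_filter, Finset.mem_singleton]
  exact ⟨fun ⟨hj, he⟩ => hτ hj hi he, fun h => by subst h; exact ⟨hi, rfl⟩⟩

/-- All data needed for the construction, for a fixed `p` and mother sequence `x`. -/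
structure Pack (p : ℝ) (x : ℕ → E) where
  u : ℝ → ℕ → E
  Φ : ℝ → Set ℕ
  S : Set ℕ
  hp : 1 < p
  huP : ∀ r, Memℓp (u r) (ENNReal.ofReal p)
  hΦS : ∀ r, Φ r ⊆ S
  hu0 : ∀ r n, n ∉ Φ r → u r n = 0
  hAD : ∀ r r', 0 < r → 0 < r' → r ≠ r' → (Φ r ∩ Φ r').Finite
  P1 : ∀ q, 1 ≤ q → q < p → ∀ c : ℝ, c ≠ 0 → ∀ T : Set ℕ, T.Finite →
    ∀ v : ℕ → E, (∀ n, n ∉ S → n ∉ T → v n = c • x n) → ¬ Memℓp v (ENNReal.ofReal q)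
  P2 : ∀ q, 1 ≤ q → q < p → ∀ r, 0 < r → ∀ c : ℝ, c ≠ 0 → ∀ T : Set ℕ, T.Finite →
    ∀ v : ℕ → E, (∀ n ∈ Φ r, n ∉ T → v n = c • u r n) → ¬ Memℓp v (ENNReal.ofReal q)

theorem Pack.key {p : ℝ} {x : ℕ → E} (pk : Pack p x)
    (a : ℝ) (G : Finset ℝ) (hG : ∀ r ∈ G, 0 < r) (e : ℝ → ℝ) (b : ℕ → E)
    (hb : (Function.support b).Finite)
    (hne : a ≠ 0 ∨ ∃ r ∈ G, e r ≠ 0) :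
    ∀ q, 1 ≤ q → q < p →
      ¬ Memℓp (a • x + (∑ r ∈ G, e r • pk.u r) + b) (ENNReal.ofReal q) := by
  classical
  intro q hq1 hqp
  have happly : ∀ n, (a • x + (∑ r ∈ G, e r • pk.u r) + b) n
      = a • x n + (∑ r ∈ G, e r • pk.u r n) + b n := by
    intro n; simp [Finset.sum_apply]
  by_cases ha : a = 0
  · obtain ⟨r0, hr0G, hr0⟩ := hne.resolve_left (by simpa using ha)
    set T : Set ℕ := Function.support b ∪ ⋃ r ∈ (↑(G.erase r0) : Set ℝ), (pk.Φ r0 ∩ pk.Φ r)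
      with hTdef
    have hT : T.Finite := by
      refine hb.union (Set.Finite.biUnion (G.erase r0).finite_toSet fun r hr => ?_)
      have hr' : r ∈ G.erase r0 := Finset.mem_coe.1 hr
      exact pk.hAD r0 r (hG r0 hr0G) (hG r (Finset.mem_of_mem_erase hr'))
        (fun h => (Finset.ne_of_mem_erase hr') h.symm)
    refine pk.P2 q hq1 hqp r0 (hG r0 hr0G) (e r0) hr0 T hT _ (fun n hnΦ hnT => ?_)
    have hbn : b n = 0 := by
      by_contra hbn
      exact hnT (Or.inl hbn)
    have hz : ∀ r ∈ G, r ≠ r0 → e r • pk.u r n = 0 := by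
      intro r hr hne'
      have hnΦr : n ∉ pk.Φ r := by
        intro hmem
        refine hnT (Or.inr ?_)
        refine Set.mem_biUnion (Finset.mem_coe.2 (Finset.mem_erase.2 ⟨hne', hr⟩)) ⟨hnΦ, hmem⟩
      rw [pk.hu0 r n hnΦr, smul_zero]
    rw [happly, Finset.sum_eq_single_of_mem r0 hr0G (fun r hr hne' => hz r hr hne'),
      ha, zero_smul, zero_add, hbn, add_zero]
  · refine pk.P1 q hq1 hqp a ha (Function.support b) hb _ (fun n hnS hnT => ?_)
    have hbn : b n = 0 := by simpa [Function.mem_support, not_not] using hnT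
    have hz : ∀ r ∈ G, e r • pk.u r n = 0 := fun r hr => by
      rw [pk.hu0 r n (fun h => hnS (pk.hΦS r h)), smul_zero]
    rw [happly, Finset.sum_eq_zero hz, hbn, add_zero, add_zero]

theorem Pack.key_zero {p : ℝ} {x : ℕ → E} (pk : Pack p x)
    (a : ℝ) (G : Finset ℝ) (hG : ∀ r ∈ G, 0 < r) (e : ℝ → ℝ) (b : ℕ → E)
    (hb : (Function.support b).Finite)
    (h0 : a • x + (∑ r ∈ G, e r • pk.u r) + b = 0) :
    a = 0 ∧ ∀ r ∈ G, e r = 0 := by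
  by_contra hc
  push_neg at hc
  have hne : a ≠ 0 ∨ ∃ r ∈ G, e r ≠ 0 := by
    by_cases ha : a = 0
    · obtain ⟨r, hr, he⟩ := hc ha
      exact Or.inr ⟨r, hr, he⟩
    · exact Or.inl ha
  have := pk.key a G hG e b hb hne 1 le_rfl pk.hp
  rw [h0] at this
  exact this zero_memℓp


theorem exists_pack (p : ℝ) (hp : 1 < p) (x : ℕ → E)
    (hxP : Memℓp x (ENNReal.ofReal p))
    (hdiv : ∀ q, 1 ≤ q → q < p → ¬ Memℓp x (ENNReal.ofReal q)) :
    Nonempty (Pack p x) := by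
  classical
  have hp0 : (0:ℝ) < p := lt_trans one_pos hp
  -- basic summability facts about x
  have hxsum : Summable fun n => ‖x n‖ ^ p := (mem_iff_summable hp0 x).1 hxP
  have hxdivS : ∀ q, 1 ≤ q → q < p → ¬ Summable fun n => ‖x n‖ ^ q := by
    intro q h1 h2 hs
    exact hdiv q h1 h2 ((mem_iff_summable (lt_of_lt_of_le one_pos h1) x).2 hs)
  -- the set where ‖x n‖ > 1 is finite
  have hTb : {n : ℕ | 1 < ‖x n‖}.Finite := by
    have hev : ∀ᶠ n in atTop, ‖x n‖ ^ p < 1 :=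
      Tendsto.eventually_lt_const one_pos hxsum.tendsto_atTop_zero
    rw [← Nat.cofinite_eq_atTop, Filter.eventually_cofinite] at hev
    refine hev.subset (fun n hn => ?_)
    simp only [Set.mem_setOf_eq, not_lt]
    exact Real.one_le_rpow hn.le hp0.le
  -- an increasing sequence of exponents tending to p
  set qq : ℕ → ℝ := fun m => p - (p-1)/(m+1) with hqq
  have hqq1 : ∀ m, 1 ≤ qq m := by
    intro m
    have h1 : (p-1)/((m:ℝ)+1) ≤ p - 1 := by
      apply div_le_self (by linarith) (by push_cast; linarith [Nat.cast_nonneg (α := ℝ) m])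
    simp only [hqq]; linarith
  have hqqp : ∀ m, qq m < p := by
    intro m
    have : (0:ℝ) < (p-1)/(m+1) := by
      apply div_pos (by linarith) (by positivity)
    simp only [hqq]; linarith
  have hqql : ∀ q, q < p → ∃ m, q ≤ qq m := by
    intro q hq
    obtain ⟨m, hm⟩ := exists_nat_gt ((p-1)/(p-q))
    refine ⟨m, ?_⟩
    have hpq : (0:ℝ) < p - q := by linarith
    have h1 : (p-1)/((m:ℝ)+1) ≤ p - q := by
      rw [div_le_iff₀ (by positivity)]
      have h2 : (p-1) ≤ (p-q) * m := by
        rw [div_lt_iff₀ hpq] at hm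
        nlinarith
      nlinarith
    simp only [hqq]; linarith
  -- exponent for each block
  set ee : ℕ → ℝ := fun j => qq (Nat.unpair (j/2)).1 with hee
  have hdivee : ∀ j, ¬ Summable fun n => ‖x n‖ ^ ee j :=
    fun j => hxdivS _ (hqq1 _) (hqqp _)
  -- blocks with mass ≥ 1
  have exstep : ∀ j a : ℕ, ∃ b : ℕ, a < b ∧ 1 ≤ ∑ n ∈ Finset.Ico a b, ‖x n‖ ^ ee j := by
    intro j a
    have hnn : ∀ n, 0 ≤ ‖x n‖ ^ ee j := fun n => Real.rpow_nonneg (norm_nonneg _) _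
    have h := (not_summable_iff_tendsto_nat_atTop_of_nonneg hnn).1 (hdivee j)
    obtain ⟨b, hb⟩ := (h.eventually_ge_atTop
      (∑ n ∈ Finset.range (a+1), ‖x n‖ ^ ee j + 1)).exists
    have hmono : ∀ {s t : ℕ}, s ≤ t →
        ∑ n ∈ Finset.range s, ‖x n‖ ^ ee j ≤ ∑ n ∈ Finset.range t, ‖x n‖ ^ ee j := by
      intro s t hst
      exact Finset.sum_le_sum_of_subset_of_nonneg (Finset.range_subset_range.2 hst)
        (fun n _ _ => hnn n)
    have hab : a < b := by
      by_contra hc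
      push_neg at hc
      have := hmono (show b ≤ a+1 by omega)
      linarith
    refine ⟨b, hab, ?_⟩
    rw [Finset.sum_Ico_eq_sub _ hab.le]
    have := hmono (show a ≤ a+1 by omega)
    linarith
  -- the block endpoints
  set NN : ℕ → ℕ := fun j => Nat.rec 0 (fun j' ih => (exstep j' ih).choose) j with hNNdef
  have hNNsucc : ∀ j, NN (j+1) = (exstep j (NN j)).choose := fun j => rfl
  have hNNs : ∀ j, NN j < NN (j+1) := fun j => by
    rw [hNNsucc]; exact (exstep j (NN j)).choose_spec.1
  have hNNsum : ∀ j, 1 ≤ ∑ n ∈ Finset.Ico (NN j) (NN (j+1)), ‖x n‖ ^ ee j := fun j => by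
    rw [hNNsucc]; exact (exstep j (NN j)).choose_spec.2
  have hNNmono : StrictMono NN := strictMono_nat_of_lt_succ hNNs
  have hNN0 : NN 0 = 0 := rfl
  -- the block index of n
  set bi : ℕ → ℕ := fun n => Nat.findGreatest (fun j => NN j ≤ n) n with hbidef
  have hbi_le : ∀ n, NN (bi n) ≤ n := fun n =>
    Nat.findGreatest_spec (P := fun j => NN j ≤ n) (Nat.zero_le n) (show NN 0 ≤ n from hNN0 ▸ Nat.zero_le n)
  have hbi_lt : ∀ n, n < NN (bi n + 1) := by
    intro n
    by_contra h
    push_neg at h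
    have h1 : bi n + 1 ≤ n := le_trans hNNmono.le_apply h
    exact Nat.findGreatest_is_greatest (Nat.lt_succ_self _) h1 h
  have hbi_eq : ∀ j n, NN j ≤ n → n < NN (j+1) → bi n = j := by
    intro j n h1 h2
    rcases lt_trichotomy (bi n) j with h | h | h
    · exact absurd (lt_of_lt_of_le (hbi_lt n) (hNNmono.monotone (Nat.succ_le_of_lt h))) (not_lt.2 h1)
    · exact h
    · exact absurd (lt_of_lt_of_le h2 (hNNmono.monotone (Nat.succ_le_of_lt h))) (not_lt.2 (hbi_le n))
  -- the splitting set
  set SS : Set ℕ := {n | Even (bi n)} with hSS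
  -- divergence along infinitely many disjoint blocks
  have blocks : ∀ (m : ℕ) (A : Set ℕ) (jf : ℕ → ℕ), StrictMono jf →
      (∀ i, ee (jf i) = qq m) → (∀ i n, NN (jf i) ≤ n → n < NN (jf i + 1) → n ∈ A) →
      ¬ Summable (A.indicator fun n => ‖x n‖ ^ qq m) := by
    intro m A jf hjf hjfee hjfA hs
    have hnn : ∀ n, 0 ≤ ‖x n‖ ^ qq m := fun n => Real.rpow_nonneg (norm_nonneg _) _
    have hind0 : ∀ n, 0 ≤ A.indicator (fun n => ‖x n‖ ^ qq m) n :=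
      indicator_nonneg (fun n _ => hnn n)
    obtain ⟨K, hK⟩ := exists_nat_gt (∑' n, A.indicator (fun n => ‖x n‖ ^ qq m) n)
    set B : ℕ → Finset ℕ := fun i => Finset.Ico (NN (jf i)) (NN (jf i + 1)) with hB
    have hdisj : ∀ i ∈ Finset.range K, ∀ i' ∈ Finset.range K, i ≠ i' →
        Disjoint (B i) (B i') := by
      have hcore : ∀ i i' : ℕ, i < i' → Disjoint (B i) (B i') := by
        intro i i' hii
        rw [Finset.disjoint_left]
        intro n hn hn'
        rw [hB, Finset.mem_Ico] at hn hn'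
        have : NN (jf i + 1) ≤ NN (jf i') := hNNmono.monotone (hjf hii)
        omega
      intro i _ i' _ hne
      rcases lt_or_gt_of_ne hne with h | h
      · exact hcore i i' h
      · exact (hcore i' i h).symm
    have hsum : (K : ℝ) ≤ ∑ n ∈ (Finset.range K).biUnion B,
        A.indicator (fun n => ‖x n‖ ^ qq m) n := by
      rw [Finset.sum_biUnion (fun i hi i' hi' hne => hdisj i hi i' hi' hne)]
      have h1 : ∀ i ∈ Finset.range K,
          (1:ℝ) ≤ ∑ n ∈ B i, A.indicator (fun n => ‖x n‖ ^ qq m) n := by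
        intro i _
        have heq : ∑ n ∈ B i, A.indicator (fun n => ‖x n‖ ^ qq m) n
            = ∑ n ∈ B i, ‖x n‖ ^ ee (jf i) := by
          refine Finset.sum_congr rfl fun n hn => ?_
          rw [hB, Finset.mem_Ico] at hn
          rw [Set.indicator_of_mem (hjfA i n hn.1 hn.2), hjfee]
        rw [heq]
        exact hNNsum (jf i)
      calc (K:ℝ) = ∑ _i ∈ Finset.range K, (1:ℝ) := by simp
        _ ≤ _ := Finset.sum_le_sum h1
    have := hs.sum_le_tsum ((Finset.range K).biUnion B) (fun n _ => hind0 n)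
    linarith
  have hSdiv0 : ∀ m, ¬ Summable (SS.indicator fun n => ‖x n‖ ^ qq m) := by
    intro m
    refine blocks m SS (fun i => 2 * Nat.pair m i) ?_ ?_ ?_
    · intro i i' hii
      have h := Nat.pair_lt_pair_right m hii
      simp only []
      omega
    · intro i
      have : (2 * Nat.pair m i) / 2 = Nat.pair m i := by omega
      rw [hee]; simp only [this, Nat.unpair_pair]
    · intro i n h1 h2
      have h1' : NN (2 * Nat.pair m i) ≤ n := h1
      have h2' : n < NN (2 * Nat.pair m i + 1) := h2
      rw [hSS, Set.mem_setOf_eq, hbi_eq (2 * Nat.pair m i) n h1' h2']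
      exact even_two_mul _
  have hScdiv0 : ∀ m, ¬ Summable (SSᶜ.indicator fun n => ‖x n‖ ^ qq m) := by
    intro m
    refine blocks m SSᶜ (fun i => 2 * Nat.pair m i + 1) ?_ ?_ ?_
    · intro i i' hii
      have h := Nat.pair_lt_pair_right m hii
      simp only []
      omega
    · intro i
      have : (2 * Nat.pair m i + 1) / 2 = Nat.pair m i := by omega
      rw [hee]; simp only [this, Nat.unpair_pair]
    · intro i n h1 h2
      have h1' : NN (2 * Nat.pair m i + 1) ≤ n := h1
      have h2' : n < NN (2 * Nat.pair m i + 1 + 1) := h2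
      rw [Set.mem_compl_iff, hSS, Set.mem_setOf_eq, hbi_eq (2 * Nat.pair m i + 1) n h1' h2']
      simp [Nat.even_add_one, parity_simps]
  -- upgrade to all exponents in [1, p)
  have upg : ∀ A : Set ℕ, (∀ m, ¬ Summable (A.indicator fun n => ‖x n‖ ^ qq m)) →
      ∀ q, 1 ≤ q → q < p → ¬ Summable (A.indicator fun n => ‖x n‖ ^ q) := by
    intro A hA q h1 h2 hs
    obtain ⟨m, hm⟩ := hqql q h2
    refine hA m (summable_of_le_off_finite {n : ℕ | 1 < ‖x n‖} hTb hs ?_ ?_)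
    · exact indicator_nonneg (fun n _ => Real.rpow_nonneg (norm_nonneg _) _)
    · intro n hn
      simp only [Set.mem_setOf_eq, not_lt] at hn
      by_cases hnA : n ∈ A
      · rw [Set.indicator_of_mem hnA, Set.indicator_of_mem hnA]
        rcases eq_or_lt_of_le (norm_nonneg (x n)) with h0 | h0
        · rw [← h0, Real.zero_rpow (by linarith), Real.zero_rpow (by linarith)]
        · exact Real.rpow_le_rpow_of_exponent_ge h0 hn hm
      · rw [Set.indicator_of_notMem hnA, Set.indicator_of_notMem hnA]
  have hSdiv : ∀ q, 1 ≤ q → q < p → ¬ Summable (SS.indicator fun n => ‖x n‖ ^ q) :=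
    upg SS hSdiv0
  have hScdiv : ∀ q, 1 ≤ q → q < p → ¬ Summable (SSᶜ.indicator fun n => ‖x n‖ ^ q) :=
    upg SSᶜ hScdiv0
  -- SS is infinite
  have hSinf : SS.Infinite := by
    by_contra hinf
    rw [Set.not_infinite] at hinf
    have hfin := hinf
    refine hSdiv 1 le_rfl hp (summable_of_ne_finset_zero (s := hfin.toFinset) ?_)
    intro n hn
    exact Set.indicator_of_notMem (by simpa using hn) _
  have hSinf' : {n | n ∈ SS}.Infinite := hSinf
  -- enumerate SS
  set st : ℕ → ℕ := Nat.nth (· ∈ SS) with hst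
  have hstmem : ∀ k, st k ∈ SS := fun k => Nat.nth_mem_of_infinite hSinf' k
  have hstinj : Function.Injective st := Nat.nth_injective hSinf'
  have hstrange : Set.range st = SS := Nat.range_nth_of_infinite hSinf'
  -- the transplanted sequence
  set ξ : ℕ → E := fun k => x (st k) with hξ
  have hξsum : Summable fun k => ‖ξ k‖ ^ p := hxsum.comp_injective hstinj
  have hξdiv : ∀ q, 1 ≤ q → q < p → ¬ Summable fun k => ‖ξ k‖ ^ q := by
    intro q h1 h2 hs
    refine hSdiv q h1 h2 ?_
    have hiff := Function.Injective.summable_iff (f := SS.indicator fun n => ‖x n‖ ^ q)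
      hstinj (fun n hn => Set.indicator_of_notMem (by rwa [← hstrange]) _)
    refine hiff.1 ?_
    refine hs.congr (fun k => ?_)
    simp only [Function.comp_apply]
    rw [Set.indicator_of_mem (hstmem k)]
  -- the almost disjoint family
  set fl : ℕ → ℝ → ℕ := fun k r => ⌊(2:ℝ) ^ k * r⌋₊ with hfl
  set φ : ℝ → ℕ → ℕ := fun r k => st (Nat.pair k (fl k r)) with hφ
  have hφinj : ∀ r, Function.Injective (φ r) := by
    intro r a b h
    exact (Nat.pair_eq_pair.1 (hstinj h)).1
  have hφS : ∀ r k, φ r k ∈ SS := fun r k => hstmem _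
  have hadcore : ∀ r r', 0 < r → r < r' → (Set.range (φ r) ∩ Set.range (φ r')).Finite := by
    intro r r' hr hrr'
    obtain ⟨K, hK⟩ := pow_unbounded_of_one_lt (1/(r'-r)) (one_lt_two (α := ℝ))
    have hKk : ∀ k, K ≤ k → fl k r ≠ fl k r' := by
      intro k hk hfleq
      have h2k : (1:ℝ)/(r'-r) < 2 ^ k :=
        lt_of_lt_of_le hK (pow_le_pow_right₀ one_le_two hk)
      have hgap : (2:ℝ)^k * r + 1 ≤ 2^k * r' := by
        rw [div_lt_iff₀ (by linarith)] at h2k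
        nlinarith
      have h1 : fl k r + 1 ≤ fl k r' := by
        rw [hfl]
        simp only
        rw [← Nat.floor_add_one (by positivity : (0:ℝ) ≤ 2^k * r)]
        exact Nat.floor_le_floor hgap
      omega
    refine Set.Finite.subset ((Set.finite_Iio K).image (φ r)) ?_
    rintro n ⟨⟨k, rfl⟩, ⟨k', hk'⟩⟩
    obtain ⟨h1, h2⟩ := Nat.pair_eq_pair.1 (hstinj hk')
    refine Set.mem_image_of_mem _ (show k ∈ Set.Iio K from ?_)
    subst h1
    rw [Set.mem_Iio]
    by_contra hc
    push_neg at hc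
    exact hKk k' hc h2.symm
  have hAD : ∀ r r', 0 < r → 0 < r' → r ≠ r' →
      (Set.range (φ r) ∩ Set.range (φ r')).Finite := by
    intro r r' hr hr' hne
    rcases lt_or_gt_of_ne hne with h | h
    · exact hadcore r r' hr h
    · rw [Set.inter_comm]
      exact hadcore r' r hr' h
  -- the spread sequences
  set u : ℝ → ℕ → E := fun r n => if h : ∃ k, φ r k = n then ξ h.choose else 0 with hu
  have hu_apply : ∀ r k, u r (φ r k) = ξ k := by
    intro r k
    have h : ∃ k', φ r k' = φ r k := ⟨k, rfl⟩
    rw [hu]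
    simp only [dif_pos h]
    exact congrArg ξ (hφinj r h.choose_spec)
  have hu_zero : ∀ r n, n ∉ Set.range (φ r) → u r n = 0 := by
    intro r n hn
    rw [hu]
    exact dif_neg (fun h => hn (Set.mem_range.2 h))
  have huP : ∀ r, Memℓp (u r) (ENNReal.ofReal p) := by
    intro r
    rw [mem_iff_summable hp0]
    have hiff := Function.Injective.summable_iff (f := fun n => ‖u r n‖ ^ p)
      (hφinj r) (fun n hn => by show ‖u r n‖ ^ p = 0; rw [hu_zero r n hn, norm_zero, Real.zero_rpow hp0.ne'])
    refine hiff.1 ?_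
    refine hξsum.congr (fun k => ?_)
    simp only [Function.comp_apply]
    rw [hu_apply]
  -- P1
  have P1 : ∀ q, 1 ≤ q → q < p → ∀ c : ℝ, c ≠ 0 → ∀ T : Set ℕ, T.Finite →
      ∀ v : ℕ → E, (∀ n, n ∉ SS → n ∉ T → v n = c • x n) → ¬ Memℓp v (ENNReal.ofReal q) := by
    intro q h1 h2 c hc T hT v hv hmem
    have hq0 : (0:ℝ) < q := lt_of_lt_of_le one_pos h1
    have hs : Summable fun n => ‖v n‖ ^ q := (mem_iff_summable hq0 v).1 hmem
    have hcq : (0:ℝ) < |c| ^ q := Real.rpow_pos_of_pos (abs_pos.2 hc) q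
    refine hScdiv q h1 h2 ?_
    refine summable_of_le_off_finite T hT ((hs.mul_left ((|c| ^ q)⁻¹)))
      (indicator_nonneg (fun n _ => Real.rpow_nonneg (norm_nonneg _) _)) ?_
    intro n hn
    by_cases hnS : n ∈ SSᶜ
    · rw [Set.indicator_of_mem hnS]
      rw [hv n hnS hn, norm_smul, Real.norm_eq_abs,
        Real.mul_rpow (abs_nonneg c) (norm_nonneg _), inv_mul_cancel_left₀ hcq.ne']
    · rw [Set.indicator_of_notMem hnS]
      positivity
  -- P2
  have P2 : ∀ q, 1 ≤ q → q < p → ∀ r, 0 < r → ∀ c : ℝ, c ≠ 0 → ∀ T : Set ℕ, T.Finite →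
      ∀ v : ℕ → E, (∀ n ∈ Set.range (φ r), n ∉ T → v n = c • u r n) →
      ¬ Memℓp v (ENNReal.ofReal q) := by
    intro q h1 h2 r hr c hc T hT v hv hmem
    have hq0 : (0:ℝ) < q := lt_of_lt_of_le one_pos h1
    have hs : Summable fun n => ‖v n‖ ^ q := (mem_iff_summable hq0 v).1 hmem
    have hcq : (0:ℝ) < |c| ^ q := Real.rpow_pos_of_pos (abs_pos.2 hc) q
    have hsφ : Summable fun k => ‖v (φ r k)‖ ^ q := by
      have := hs.comp_injective (hφinj r)
      exact this.congr (fun k => rfl)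
    refine hξdiv q h1 h2 ?_
    have hbad : (φ r ⁻¹' T).Finite :=
      Set.Finite.preimage (Set.injOn_of_injective (hφinj r)) hT
    refine summable_of_le_off_finite (φ r ⁻¹' T) hbad (hsφ.mul_left ((|c| ^ q)⁻¹))
      (fun k => Real.rpow_nonneg (norm_nonneg _) _) ?_
    intro k hk
    rw [hv (φ r k) (Set.mem_range_self k) (by simpa using hk), hu_apply, norm_smul,
      Real.norm_eq_abs, Real.mul_rpow (abs_nonneg c) (norm_nonneg _),
      inv_mul_cancel_left₀ hcq.ne']
  exact ⟨⟨u, fun r => Set.range (φ r), SS, hp, huP, fun r => by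
    rw [← hstrange]; rintro n ⟨k, rfl⟩; exact ⟨_, rfl⟩, hu_zero, hAD, P1, P2⟩⟩


theorem memℓp_of_finite_support {p : ℝ} (hp : 0 < p) (f : ℕ → E) (N : ℕ)
    (h : ∀ n, N ≤ n → f n = 0) : Memℓp f (ENNReal.ofReal p) := by
  rw [mem_iff_summable hp]
  refine summable_of_ne_finset_zero (s := Finset.range N) (fun n hn => ?_)
  rw [h n (by simpa using hn), norm_zero, Real.zero_rpow hp.ne']

theorem exists_dense_seq' [TopologicalSpace.SeparableSpace E]
    (p : ℝ) (hp : 1 < p) [Fact (1 ≤ ENNReal.ofReal p)] :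
    ∃ d : ℕ → lp (fun _ : ℕ => E) (ENNReal.ofReal p),
      DenseRange d ∧ ∀ j, (Function.support fun n => (d j : ∀ _ : ℕ, E) n).Finite := by
  classical
  have hp0 : (0:ℝ) < p := lt_trans one_pos hp
  have hpt : (ENNReal.ofReal p).toReal = p := ENNReal.toReal_ofReal hp0.le
  obtain ⟨D, hDc, hDd⟩ := TopologicalSpace.exists_countable_dense E
  set D' : Set E := insert 0 D with hD'
  have hD'c : D'.Countable := hDc.insert 0
  set 𝒟 : Set (lp (fun _ : ℕ => E) (ENNReal.ofReal p)) :=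
    {f | (∀ n, (f : ∀ _ : ℕ, E) n ∈ D') ∧
      ∃ N, ∀ n, N ≤ n → (f : ∀ _ : ℕ, E) n = 0} with h𝒟
  -- countability
  have hcnt : 𝒟.Countable := by
    haveI : Countable ↥D' := hD'c.to_subtype
    set F : (Σ N : ℕ, (Fin N → ↥D')) → lp (fun _ : ℕ => E) (ENNReal.ofReal p) := fun y =>
      ⟨fun n => if h : n < y.1 then (y.2 ⟨n, h⟩ : E) else 0,
        memℓp_of_finite_support hp0 _ y.1 (fun n hn => dif_neg (by omega))⟩ with hF
    refine (Set.countable_range F).mono ?_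
    rintro f ⟨hfD, N, hN⟩
    refine ⟨⟨N, fun i => ⟨(f : ∀ _ : ℕ, E) i, hfD i⟩⟩, ?_⟩
    apply lp.ext
    funext n
    show (fun n => if h : n < N then (f : ∀ _ : ℕ, E) n else 0) n = (f : ∀ _ : ℕ, E) n
    by_cases h : n < N
    · simp only [dif_pos h]
    · simp only [dif_neg h]; exact (hN n (by omega)).symm
  have hne : 𝒟.Nonempty := by
    refine ⟨0, fun n => ?_, 0, fun n _ => ?_⟩
    · rw [lp.coeFn_zero]; exact Set.mem_insert 0 D
    · rw [lp.coeFn_zero]; rfl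
  -- density
  have hdense : Dense 𝒟 := by
    rw [Metric.dense_iff]
    intro y ε hε
    set δ : ℝ := (ε/2) ^ p with hδ
    have hδ0 : 0 < δ := Real.rpow_pos_of_pos (by linarith) p
    have hy : Summable fun n => ‖(y : ∀ _ : ℕ, E) n‖ ^ p := by
      have := lp.memℓp y
      rwa [memℓp_gen_iff (by rw [hpt]; exact hp0), hpt] at this
    obtain ⟨N, hN⟩ := (Tendsto.eventually_lt_const hδ0
      (tendsto_sum_nat_add fun n => ‖(y : ∀ _ : ℕ, E) n‖ ^ p)).exists
    have hsel : ∀ n : ℕ, ∃ z ∈ D, ‖(y : ∀ _ : ℕ, E) n - z‖ ^ p ≤ δ / (N+1) := by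
      intro n
      have hδN : (0:ℝ) < (δ/(N+1)) ^ (1/p) := Real.rpow_pos_of_pos (by positivity) _
      obtain ⟨z, hzD, hz⟩ := Metric.mem_closure_iff.1 (hDd ((y : ∀ _ : ℕ, E) n)) _ hδN
      refine ⟨z, hzD, ?_⟩
      rw [dist_eq_norm] at hz
      calc ‖(y : ∀ _ : ℕ, E) n - z‖ ^ p ≤ ((δ/(N+1)) ^ (1/p)) ^ p :=
            Real.rpow_le_rpow (norm_nonneg _) hz.le hp0.le
        _ = δ / (N+1) := by
            rw [← Real.rpow_mul (by positivity), one_div, inv_mul_cancel₀ hp0.ne',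
              Real.rpow_one]
    choose sel hselD hselbd using hsel
    set gf : ℕ → E := fun n => if n < N then sel n else 0 with hgf
    set g : lp (fun _ : ℕ => E) (ENNReal.ofReal p) :=
      ⟨gf, memℓp_of_finite_support hp0 _ N (fun n hn => if_neg (by omega))⟩ with hg
    have hgmem : g ∈ 𝒟 := by
      constructor
      · intro n
        show gf n ∈ D'
        rw [hgf]
        by_cases h : n < N
        · simp only [if_pos h]; exact Set.mem_insert_of_mem _ (hselD n)
        · simp only [if_neg h]; exact Set.mem_insert 0 D
      · exact ⟨N, fun n hn => if_neg (by omega)⟩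
    -- estimate the distance
    have hsub : Summable fun n => ‖(y : ∀ _ : ℕ, E) n - gf n‖ ^ p := by
      have hmem := lp.memℓp (y - g)
      rw [memℓp_gen_iff (by rw [hpt]; exact hp0), hpt] at hmem
      refine hmem.congr (fun n => ?_)
      rw [lp.coeFn_sub]
      rfl
    have hnorm : ‖y - g‖ ^ p = ∑' n, ‖(y : ∀ _ : ℕ, E) n - gf n‖ ^ p := by
      have hfor := lp.norm_rpow_eq_tsum (p := ENNReal.ofReal p)
        (by rw [hpt]; exact hp0) (y - g)
      rw [hpt] at hfor
      rw [hfor]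
      refine tsum_congr (fun n => ?_)
      rw [lp.coeFn_sub]
      rfl
    have hsplit : ∑' n, ‖(y : ∀ _ : ℕ, E) n - gf n‖ ^ p
        = ∑ n ∈ Finset.range N, ‖(y : ∀ _ : ℕ, E) n - gf n‖ ^ p
          + ∑' k, ‖(y : ∀ _ : ℕ, E) (k + N) - gf (k + N)‖ ^ p :=
      (Summable.sum_add_tsum_nat_add N hsub).symm
    have hfirst : ∑ n ∈ Finset.range N, ‖(y : ∀ _ : ℕ, E) n - gf n‖ ^ p ≤ δ := by
      have hb : ∀ n ∈ Finset.range N, ‖(y : ∀ _ : ℕ, E) n - gf n‖ ^ p ≤ δ/(N+1) := by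
        intro n hn
        rw [Finset.mem_range] at hn
        rw [hgf]
        simp only [if_pos hn]
        exact hselbd n
      calc ∑ n ∈ Finset.range N, ‖(y : ∀ _ : ℕ, E) n - gf n‖ ^ p
          ≤ ∑ _n ∈ Finset.range N, δ/(N+1) := Finset.sum_le_sum hb
        _ = N * (δ/(N+1)) := by simp [mul_comm]
        _ ≤ δ := by
            rw [mul_div_assoc']
            rw [div_le_iff₀ (by positivity)]
            nlinarith [hδ0.le]
    have hsecond : ∑' k, ‖(y : ∀ _ : ℕ, E) (k + N) - gf (k + N)‖ ^ p < δ := by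
      have : ∀ k : ℕ, ‖(y : ∀ _ : ℕ, E) (k + N) - gf (k + N)‖ ^ p
          = ‖(y : ∀ _ : ℕ, E) (k + N)‖ ^ p := by
        intro k
        rw [hgf]
        simp only [if_neg (by omega : ¬ (k + N < N)), sub_zero]
      rw [tsum_congr this]
      exact hN
    have htotal : ‖y - g‖ ^ p < ε ^ p := by
      rw [hnorm, hsplit]
      have h2p : (2:ℝ) ≤ 2 ^ p := by
        calc (2:ℝ) = 2 ^ (1:ℝ) := (Real.rpow_one 2).symm
        _ ≤ 2 ^ p := Real.rpow_le_rpow_of_exponent_le one_le_two hp.le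
      have hδε : 2 * δ ≤ ε ^ p := by
        rw [hδ, Real.div_rpow (by linarith) (by norm_num)]
        rw [mul_div_assoc']
        rw [div_le_iff₀ (by positivity)]
        have hεp : (0:ℝ) ≤ ε ^ p := Real.rpow_nonneg (by linarith) p
        nlinarith
      linarith
    have hlt : ‖y - g‖ < ε := by
      by_contra hc
      push_neg at hc
      exact absurd (Real.rpow_le_rpow (by linarith) hc hp0.le) (not_le.2 htotal)
    exact ⟨g, Metric.mem_ball.2 (by rw [dist_comm, dist_eq_norm]; exact hlt), hgmem⟩
  obtain ⟨d, hd⟩ := hcnt.exists_eq_range hne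
  refine ⟨d, ?_, ?_⟩
  · rw [DenseRange, ← hd]; exact hdense
  · intro j
    have hmem : d j ∈ 𝒟 := hd ▸ Set.mem_range_self j
    obtain ⟨-, N, hN⟩ := hmem
    refine (Set.finite_Iio N).subset (fun n hn => ?_)
    rw [Set.mem_Iio]
    by_contra hc
    push_neg at hc
    exact hn (hN n hc)

end Stmt15

open Set in
open Stmt15 in
set_option maxHeartbeats 1000000 in
/-- Let `E` be a nonzero separable real Banach space and `1 < p < ∞`.
The set `M = ℓ_p(E) \ ⋃_{1 ≤ q < p} ℓ_q(E)` is infinitely pointwise `𝔠`-dense lineable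
in `ℓ_p(E)`.  (The instance `Fact (1 ≤ ENNReal.ofReal p)`, which follows from `1 < p`,
provides the `ℓ_p`-norm topology.) -/
theorem lp_setminus_infinitely_pointwise_continuum_dense_lineable
    (E : Type) [NormedAddCommGroup E] [NormedSpace ℝ E] [CompleteSpace E]
    [Nontrivial E] [TopologicalSpace.SeparableSpace E]
    (p : ℝ) (hp : 1 < p) [Fact (1 ≤ ENNReal.ofReal p)]
    (M : Set (lp (fun _ : ℕ => E) (ENNReal.ofReal p)))
    (hM : M = {x : lp (fun _ : ℕ => E) (ENNReal.ofReal p) |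
      ∀ q : ℝ, 1 ≤ q → q < p → ¬ Memℓp (x : ∀ _ : ℕ, E) (ENNReal.ofReal q)}) :
    ∀ x ∈ M, ∃ W : ℕ → Submodule ℝ (lp (fun _ : ℕ => E) (ENNReal.ofReal p)),
      ∀ k : ℕ,
        Module.rank ℝ (W k) = Cardinal.continuum ∧
        x ∈ W k ∧
        (W k : Set (lp (fun _ : ℕ => E) (ENNReal.ofReal p))) ⊆ M ∪ {0} ∧
        (∀ l : ℕ, l ≠ k → W k ⊓ W l = Submodule.span ℝ {x}) ∧
        Dense (W k : Set (lp (fun _ : ℕ => E) (ENNReal.ofReal p))) := by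
  subst hM
  intro x hxM
  classical
  have hp0 : (0:ℝ) < p := lt_trans one_pos hp
  obtain ⟨pk⟩ := exists_pack p hp (⇑x) (lp.memℓp x) (fun q h1 h2 => hxM q h1 h2)
  obtain ⟨d0, hd0dense, hd0fin⟩ := exists_dense_seq' (E := E) p hp
  -- a dense sequence where each element appears with arbitrarily large index
  set d : ℕ → lp (fun _ : ℕ => E) (ENNReal.ofReal p) := fun j => d0 (Nat.unpair j).1 with hd
  have hdfin : ∀ j, (Function.support fun n => (d j : ∀ _ : ℕ, E) n).Finite :=
    fun j => hd0fin _
  have hddense : DenseRange d := by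
    have hr : Set.range d = Set.range d0 := by
      apply Set.Subset.antisymm
      · rintro y ⟨j, rfl⟩; exact ⟨(Nat.unpair j).1, rfl⟩
      · rintro y ⟨i, rfl⟩
        exact ⟨Nat.pair i 0, by rw [hd]; simp only [Nat.unpair_pair]⟩
    rw [DenseRange, hr]; exact hd0dense
  -- bundled u
  set uL : ℝ → lp (fun _ : ℕ => E) (ENNReal.ofReal p) := fun r => ⟨pk.u r, pk.huP r⟩ with huL
  have huLcoe : ∀ r, (uL r : ∀ _ : ℕ, E) = pk.u r := fun r => rfl
  -- perturbation parameters
  set τ : ℕ → ℕ → ℝ := fun k j => 2*k + 1 - 1/(j+2) with hτ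
  have hτmem : ∀ (k j : ℕ), 2*(k:ℝ) < τ k j ∧ τ k j < 2*(k:ℝ)+1 := by
    intro k j
    have h0 : (0:ℝ) ≤ (j:ℝ) := Nat.cast_nonneg j
    have h1 : (0:ℝ) < 1/((j:ℝ)+2) := by positivity
    have h2 : 1/((j:ℝ)+2) < 1 := by
      rw [div_lt_one (by positivity)]; linarith
    constructor
    · show 2*(k:ℝ) < 2*(k:ℝ) + 1 - 1/((j:ℝ)+2); linarith
    · show 2*(k:ℝ) + 1 - 1/((j:ℝ)+2) < 2*(k:ℝ)+1; linarith
  have hτinj : ∀ k, Function.Injective (τ k) := by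
    intro k a b hab
    have hab' : (1:ℝ)/((a:ℝ)+2) = 1/((b:ℝ)+2) := by
      have h : 2*(k:ℝ) + 1 - 1/((a:ℝ)+2) = 2*(k:ℝ) + 1 - 1/((b:ℝ)+2) := hab
      linarith
    rw [one_div, one_div, inv_inj] at hab'
    have h2 : (a:ℝ) = b := by linarith
    exact_mod_cast h2
  set εv : ℕ → ℕ → ℝ := fun k j => (1/((j:ℝ)+1)) / (1 + ‖uL (τ k j)‖) with hεv
  have hεvpos : ∀ k j, 0 < εv k j := by
    intro k j
    have h1 : (0:ℝ) < 1 + ‖uL (τ k j)‖ := by positivity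
    have h2 : (0:ℝ) < 1/((j:ℝ)+1) := by positivity
    exact div_pos h2 h1
  -- the generating sets and subspaces
  set gen : ℕ → Set (lp (fun _ : ℕ => E) (ENNReal.ofReal p)) := fun k =>
    ({x} ∪ (uL '' (Ioo (2*(k:ℝ)+1) (2*k+2)))) ∪
      (Set.range fun j => d j + εv k j • uL (τ k j)) with hgen
  set W : ℕ → Submodule ℝ (lp (fun _ : ℕ => E) (ENNReal.ofReal p)) :=
    fun k => Submodule.span ℝ (gen k) with hW
  -- the representation lemma
  have hrep : ∀ k w, w ∈ W k → ∃ (a : ℝ) (G : Finset ℝ) (e : ℝ → ℝ) (J : Finset ℕ)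
      (c : ℕ → ℝ), ↑G ⊆ Ioo (2*(k:ℝ)+1) (2*k+2) ∧
      (w : ∀ _ : ℕ, E) = a • (x : ∀ _ : ℕ, E) + (∑ r ∈ G, e r • pk.u r)
        + (∑ j ∈ J, c j • ((d j : ∀ _ : ℕ, E) + εv k j • pk.u (τ k j))) := by
    intro k w hw
    refine Submodule.span_induction ?_ ?_ ?_ ?_ hw
    · rintro w' hw'
      rcases hw' with (hx1 | ⟨r, hr, rfl⟩) | ⟨j, rfl⟩
      · rw [Set.mem_singleton_iff] at hx1
        subst hx1
        exact ⟨1, ∅, 0, ∅, 0, by simp, by simp⟩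
      · refine ⟨0, {r}, fun _ => 1, ∅, 0, by simpa using hr, ?_⟩
        simp [huLcoe]
      · refine ⟨0, ∅, 0, {j}, fun _ => 1, by simp, ?_⟩
        rw [lp.coeFn_add, lp.coeFn_smul]
        simp [huLcoe]
    · exact ⟨0, ∅, 0, ∅, 0, by simp, by simp [lp.coeFn_zero]; rfl⟩
    · rintro w1 w2 hw1 hw2 ⟨a1, G1, e1, J1, c1, hG1, heq1⟩ ⟨a2, G2, e2, J2, c2, hG2, heq2⟩
      refine ⟨a1 + a2, G1 ∪ G2,
        fun r => (if r ∈ G1 then e1 r else 0) + (if r ∈ G2 then e2 r else 0),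
        J1 ∪ J2,
        fun j => (if j ∈ J1 then c1 j else 0) + (if j ∈ J2 then c2 j else 0), ?_, ?_⟩
      · rw [Finset.coe_union]
        exact Set.union_subset hG1 hG2
      · rw [lp.coeFn_add, heq1, heq2]
        have hsA : ∑ r ∈ G1 ∪ G2,
            ((if r ∈ G1 then e1 r else 0) + (if r ∈ G2 then e2 r else 0)) • pk.u r
            = (∑ r ∈ G1, e1 r • pk.u r) + (∑ r ∈ G2, e2 r • pk.u r) := by
          rw [Finset.sum_congr rfl (fun r _ => add_smul _ _ _), Finset.sum_add_distrib,
            sum_extend Finset.subset_union_left e1 pk.u,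
            sum_extend Finset.subset_union_right e2 pk.u]
        have hsB : ∑ j ∈ J1 ∪ J2,
            ((if j ∈ J1 then c1 j else 0) + (if j ∈ J2 then c2 j else 0)) •
              ((d j : ∀ _ : ℕ, E) + εv k j • pk.u (τ k j))
            = (∑ j ∈ J1, c1 j • ((d j : ∀ _ : ℕ, E) + εv k j • pk.u (τ k j)))
              + (∑ j ∈ J2, c2 j • ((d j : ∀ _ : ℕ, E) + εv k j • pk.u (τ k j))) := by
          rw [Finset.sum_congr rfl (fun j _ => add_smul _ _ _), Finset.sum_add_distrib,
            sum_extend Finset.subset_union_left c1 _,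
            sum_extend Finset.subset_union_right c2 _]
        rw [hsA, hsB, add_smul]
        abel
    · rintro s w1 hw1 ⟨a1, G1, e1, J1, c1, hG1, heq1⟩
      refine ⟨s * a1, G1, fun r => s * e1 r, J1, fun j => s * c1 j, hG1, ?_⟩
      rw [lp.coeFn_smul, heq1]
      simp only [smul_add, Finset.smul_sum, mul_smul]
  -- the normalized representation
  have hnorm : ∀ k w, w ∈ W k → ∃ (a : ℝ) (H : Finset ℝ) (f : ℝ → ℝ) (b : ℕ → E),
      ↑H ⊆ Ioo (2*(k:ℝ)) (2*k+2) ∧ (Function.support b).Finite ∧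
      (w : ∀ _ : ℕ, E) = a • (x : ∀ _ : ℕ, E) + (∑ r ∈ H, f r • pk.u r) + b ∧
      ((∀ r ∈ H, f r = 0) → (w : ∀ _ : ℕ, E) = a • (x : ∀ _ : ℕ, E)) := by
    intro k w hw
    obtain ⟨a, G, e, J, c, hG, heq⟩ := hrep k w hw
    have hτIoo := hτmem k
    have hGτ : ∀ j, τ k j ∉ G := by
      intro j hjG
      have h1 := (hG (Finset.mem_coe.2 hjG)).1
      have h2 := (hτIoo j).2
      linarith
    set H : Finset ℝ := G ∪ J.image (τ k) with hH
    set f : ℝ → ℝ := fun r => (if r ∈ G then e r else 0)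
      + (∑ j ∈ J.filter (fun j => τ k j = r), c j * εv k j) with hf
    set b : ℕ → E := ∑ j ∈ J, c j • ((d j : ∀ _ : ℕ, E)) with hb
    have hbfin : (Function.support b).Finite := by
      refine Set.Finite.subset (Set.Finite.biUnion J.finite_toSet
        (fun j _ => (hdfin j).subset (Function.support_smul_subset_right _ _)))
        (support_sum_subset J _)
    have hsum : ∑ r ∈ H, f r • pk.u r
        = (∑ r ∈ G, e r • pk.u r) + ∑ j ∈ J, (c j * εv k j) • pk.u (τ k j) := by
      rw [hf]
      rw [Finset.sum_congr rfl (fun r _ => add_smul _ _ _), Finset.sum_add_distrib]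
      congr 1
      · exact sum_extend Finset.subset_union_left e pk.u
      · rw [sum_reindex J (fun j => c j * εv k j) (τ k)
          (Set.injOn_of_injective (hτinj k)) pk.u]
        refine (Finset.sum_subset Finset.subset_union_right (fun r _ hr => ?_)).symm
        have hfil : J.filter (fun j => τ k j = r) = ∅ := by
          refine Finset.filter_eq_empty_iff.2 (fun j hj => ?_)
          intro hne
          exact hr (hne ▸ Finset.mem_image_of_mem (τ k) hj)
        rw [hfil, Finset.sum_empty, zero_smul]
    have heq' : (w : ∀ _ : ℕ, E) = a • (x : ∀ _ : ℕ, E) + (∑ r ∈ H, f r • pk.u r) + b := by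
      rw [heq, hsum, hb]
      have hJ : ∑ j ∈ J, c j • ((d j : ∀ _ : ℕ, E) + εv k j • pk.u (τ k j))
          = (∑ j ∈ J, c j • ((d j : ∀ _ : ℕ, E)))
            + ∑ j ∈ J, (c j * εv k j) • pk.u (τ k j) := by
        rw [← Finset.sum_add_distrib]
        refine Finset.sum_congr rfl (fun j _ => ?_)
        rw [smul_add, smul_smul]
      rw [hJ]
      abel
    refine ⟨a, H, f, b, ?_, hbfin, heq', ?_⟩
    · intro r hr
      rw [hH, Finset.coe_union, Set.mem_union] at hr
      rcases hr with hr | hr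
      · have h2 := hG hr
        exact ⟨by linarith [h2.1], h2.2⟩
      · obtain ⟨j, hj, rfl⟩ := Finset.mem_image.1 (Finset.mem_coe.1 hr)
        exact ⟨(hτIoo j).1, by linarith [(hτIoo j).2]⟩
    · intro hf0
      have hc0 : ∀ j ∈ J, c j = 0 := by
        intro j hj
        have hmemH : τ k j ∈ H := Finset.mem_union_right _ (Finset.mem_image_of_mem _ hj)
        have h := hf0 _ hmemH
        simp only [hf] at h
        simp only [if_neg (hGτ j), zero_add] at h
        rw [filter_eq_singleton (Set.injOn_of_injective (hτinj k)) hj,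
          Finset.sum_singleton] at h
        exact (mul_eq_zero.1 h).resolve_right (hεvpos k j).ne'
      have he0 : ∀ r ∈ G, e r = 0 := by
        intro r hr
        have h := hf0 r (Finset.mem_union_left _ hr)
        simp only [hf] at h
        have hfil : J.filter (fun j => τ k j = r) = ∅ := by
          refine Finset.filter_eq_empty_iff.2 (fun j hj => ?_)
          intro hne
          have h1 := (hG (Finset.mem_coe.2 hr)).1
          have h2 := (hτIoo j).2
          rw [hne] at h2
          linarith
        rw [hfil, Finset.sum_empty, add_zero, if_pos hr] at h
        exact h
      rw [heq,
        Finset.sum_eq_zero (fun r hr => by rw [he0 r hr, zero_smul]),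
        Finset.sum_eq_zero (fun j hj => by rw [hc0 j hj, zero_smul]), add_zero, add_zero]
  -- membership of x
  have hx_gen : ∀ k, x ∈ W k := fun k => Submodule.subset_span (Or.inl (Or.inl rfl))
  -- the subset property
  have hsubM : ∀ k, (W k : Set (lp (fun _ : ℕ => E) (ENNReal.ofReal p))) ⊆
      {y : lp (fun _ : ℕ => E) (ENNReal.ofReal p) |
        ∀ q : ℝ, 1 ≤ q → q < p → ¬ Memℓp (y : ∀ _ : ℕ, E) (ENNReal.ofReal q)} ∪ {0} := by
    intro k w hw
    obtain ⟨a, H, f, b, hH, hbfin, heq', hback⟩ := hnorm k w hw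
    have hHpos : ∀ r ∈ H, 0 < r := by
      intro r hr
      have h2 := hH (Finset.mem_coe.2 hr)
      have h3 : (0:ℝ) ≤ 2*(k:ℝ) := by positivity
      linarith [h2.1]
    by_cases hz : a = 0 ∧ ∀ r ∈ H, f r = 0
    · right
      rw [Set.mem_singleton_iff]
      apply lp.ext
      rw [hback hz.2, hz.1, zero_smul]
      exact (lp.coeFn_zero _ _).symm
    · left
      intro q hq1 hq2
      have hne : a ≠ 0 ∨ ∃ r ∈ H, f r ≠ 0 := by
        by_cases ha : a = 0
        · refine Or.inr ?_
          by_contra hno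
          push_neg at hno
          exact hz ⟨ha, hno⟩
        · exact Or.inl ha
      rw [heq']
      exact pk.key a H hHpos f b hbfin hne q hq1 hq2
  -- the intersection property
  have hinter : ∀ k l, k ≠ l → W k ⊓ W l = Submodule.span ℝ {x} := by
    intro k l hkl
    apply le_antisymm
    · rintro w hw
      rw [Submodule.mem_inf] at hw
      obtain ⟨a, H, f, b, hH, hbfin, heq, hback⟩ := hnorm k w hw.1
      obtain ⟨a', H', f', b', hH', hbfin', heq2, hback'⟩ := hnorm l w hw.2
      have hdisj : Disjoint H H' := by
        rw [Finset.disjoint_left]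
        intro r hr hr'
        have h1 := hH (Finset.mem_coe.2 hr)
        have h2 := hH' (Finset.mem_coe.2 hr')
        rcases Nat.lt_or_ge k l with h | h
        · have hc : (k:ℝ) + 1 ≤ l := by exact_mod_cast Nat.succ_le_of_lt h
          have := h1.2
          have := h2.1
          linarith
        · have hlk : l < k := lt_of_le_of_ne h (Ne.symm hkl)
          have hc : (l:ℝ) + 1 ≤ k := by exact_mod_cast Nat.succ_le_of_lt hlk
          have := h2.2
          have := h1.1
          linarith
      set F : ℝ → ℝ := fun r => if r ∈ H then f r else -f' r with hF
      have hsplit : ∑ r ∈ H ∪ H', F r • pk.u r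
          = (∑ r ∈ H, f r • pk.u r) - (∑ r ∈ H', f' r • pk.u r) := by
        rw [Finset.sum_union hdisj, sub_eq_add_neg]
        congr 1
        · exact Finset.sum_congr rfl (fun r hr => by simp only [hF, if_pos hr])
        · rw [← Finset.sum_neg_distrib]
          refine Finset.sum_congr rfl (fun r hr => ?_)
          simp only [hF, if_neg (Finset.disjoint_right.1 hdisj hr)]
          rw [neg_smul]
      have hcomb : (a - a') • (x : ∀ _ : ℕ, E) + (∑ r ∈ H ∪ H', F r • pk.u r)
          + (b - b') = 0 := by
        rw [hsplit]
        have hre : (a - a') • (x : ∀ _ : ℕ, E)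
            + ((∑ r ∈ H, f r • pk.u r) - (∑ r ∈ H', f' r • pk.u r)) + (b - b')
            = (a • (x : ∀ _ : ℕ, E) + (∑ r ∈ H, f r • pk.u r) + b)
              - (a' • (x : ∀ _ : ℕ, E) + (∑ r ∈ H', f' r • pk.u r) + b') := by
          rw [sub_smul]
          abel
        rw [hre, ← heq, ← heq2, sub_self]
      have hpos : ∀ r ∈ H ∪ H', 0 < r := by
        intro r hr
        have h3 : (0:ℝ) ≤ 2*(k:ℝ) := by positivity
        have h4 : (0:ℝ) ≤ 2*(l:ℝ) := by positivity
        rcases Finset.mem_union.1 hr with h | h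
        · linarith [(hH (Finset.mem_coe.2 h)).1]
        · linarith [(hH' (Finset.mem_coe.2 h)).1]
      have hbb : (Function.support (b - b')).Finite :=
        (hbfin.union hbfin').subset (Function.support_sub _ _)
      have hz := pk.key_zero (a - a') (H ∪ H') hpos F (b - b') hbb hcomb
      have hf0 : ∀ r ∈ H, f r = 0 := by
        intro r hr
        have h := hz.2 r (Finset.mem_union_left _ hr)
        simp only [hF, if_pos hr] at h
        exact h
      refine Submodule.mem_span_singleton.2 ⟨a, ?_⟩
      apply lp.ext
      rw [lp.coeFn_smul]
      exact (hback hf0).symm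
    · rw [Submodule.span_le]
      rw [Set.singleton_subset_iff]
      exact Submodule.mem_inf.2 ⟨hx_gen k, hx_gen l⟩
  -- rank: lower bound
  have hrankge : ∀ k, Cardinal.continuum ≤ Module.rank ℝ ↥(W k) := by
    intro k
    have hIoo : 2*(k:ℝ)+1 < 2*k+2 := by linarith
    have hmemW : ∀ r : ↥(Ioo (2*(k:ℝ)+1) (2*k+2)), uL r ∈ W k := fun r =>
      Submodule.subset_span (Or.inl (Or.inr ⟨(r : ℝ), r.2, rfl⟩))
    set v : ↥(Ioo (2*(k:ℝ)+1) (2*k+2)) → ↥(W k) := fun r => ⟨uL r, hmemW r⟩ with hv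
    have hli : LinearIndependent ℝ v := by
      apply LinearIndependent.of_comp (W k).subtype
      rw [linearIndependent_iff']
      intro s g hsum i hi
      set coeL : lp (fun _ : ℕ => E) (ENNReal.ofReal p) →ₗ[ℝ] (∀ _ : ℕ, E) :=
        { toFun := fun f => ⇑f,
          map_add' := fun f g => lp.coeFn_add f g,
          map_smul' := fun c f => lp.coeFn_smul c f } with hcoeL
      have hfun : ∑ i ∈ s, g i • pk.u (i : ℝ) = 0 := by
        have h2 := congrArg coeL hsum
        rw [map_sum, map_zero] at h2
        rw [← h2]
        refine Finset.sum_congr rfl (fun i _ => ?_)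
        rw [map_smul]
        rfl
      have hinj : Set.InjOn (Subtype.val : ↥(Ioo (2*(k:ℝ)+1) (2*(k:ℝ)+2)) → ℝ) ↑s :=
        fun a _ b _ h => Subtype.ext h
      rw [sum_reindex s g Subtype.val hinj pk.u] at hfun
      have hposim : ∀ r ∈ s.image (Subtype.val : ↥(Ioo (2*(k:ℝ)+1) (2*(k:ℝ)+2)) → ℝ),
          0 < r := by
        intro r hr
        obtain ⟨i', hi', rfl⟩ := Finset.mem_image.1 hr
        have h3 : (0:ℝ) ≤ 2*(k:ℝ) := by positivity
        linarith [i'.2.1]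
      have hz := pk.key_zero 0
        (s.image (Subtype.val : ↥(Ioo (2*(k:ℝ)+1) (2*(k:ℝ)+2)) → ℝ)) hposim
        (fun r => ∑ i2 ∈ s.filter (fun i2 => Subtype.val i2 = r), g i2) 0 (by simp)
        (by rw [zero_smul, zero_add, add_zero]; exact hfun)
      have h4 := hz.2 (↑i) (Finset.mem_image_of_mem _ hi)
      beta_reduce at h4
      rw [filter_eq_singleton hinj hi, Finset.sum_singleton] at h4
      exact h4
    have hcard := hli.cardinal_le_rank
    rwa [Cardinal.mk_Ioo_real hIoo] at hcard
  -- rank: upper bound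
  have hEle : Cardinal.mk E ≤ Cardinal.continuum := by
    obtain ⟨seq, hseq⟩ := TopologicalSpace.exists_dense_seq E
    have hinj : Function.Injective (fun (y : E) (n : ℕ) => dist y (seq n)) := by
      intro y y' h
      by_contra hne
      have hd : 0 < dist y y' := dist_pos.2 hne
      obtain ⟨n, hn⟩ := hseq.exists_dist_lt y (show (0:ℝ) < dist y y' / 2 by linarith)
      have h1 : dist y (seq n) = dist y' (seq n) := congrFun h n
      have h2 : dist y y' ≤ dist y (seq n) + dist (seq n) y' := dist_triangle _ _ _
      rw [dist_comm (seq n) y', ← h1] at h2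
      linarith
    calc Cardinal.mk E ≤ Cardinal.mk (ℕ → ℝ) := Cardinal.mk_le_of_injective hinj
      _ = Cardinal.continuum := by
          rw [Cardinal.mk_arrow, Cardinal.lift_id, Cardinal.lift_id, Cardinal.mk_real,
            Cardinal.mk_nat, Cardinal.continuum_power_aleph0]
  have hXle : Cardinal.mk (lp (fun _ : ℕ => E) (ENNReal.ofReal p)) ≤ Cardinal.continuum := by
    have hinj : Function.Injective
        (fun w : lp (fun _ : ℕ => E) (ENNReal.ofReal p) => (w : ∀ _ : ℕ, E)) :=
      fun w1 w2 h => lp.ext h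
    calc Cardinal.mk (lp (fun _ : ℕ => E) (ENNReal.ofReal p))
        ≤ Cardinal.mk (ℕ → E) := Cardinal.mk_le_of_injective hinj
      _ = Cardinal.mk E ^ Cardinal.aleph0 := by
          rw [Cardinal.mk_arrow, Cardinal.lift_id, Cardinal.lift_id, Cardinal.mk_nat]
      _ ≤ Cardinal.continuum ^ Cardinal.aleph0 := Cardinal.power_le_power_right hEle
      _ = Cardinal.continuum := Cardinal.continuum_power_aleph0
  have hrankle : ∀ k, Module.rank ℝ ↥(W k) ≤ Cardinal.continuum :=
    fun k => le_trans (Submodule.rank_le (W k)) (le_trans (rank_le_card ℝ _) hXle)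
  -- density
  have hdenseW : ∀ k, Dense (W k : Set (lp (fun _ : ℕ => E) (ENNReal.ofReal p))) := by
    intro k
    rw [Metric.dense_iff]
    intro y ρ hρ
    obtain ⟨j0, hj0⟩ := hddense.exists_dist_lt y (show (0:ℝ) < ρ/2 by linarith)
    obtain ⟨t, ht⟩ := exists_nat_gt (2/ρ)
    set j : ℕ := Nat.pair (Nat.unpair j0).1 t with hj
    have hdj : d j = d j0 := by rw [hd]; simp only [hj, Nat.unpair_pair]
    have htj : (t:ℝ) ≤ (j:ℝ) := by exact_mod_cast Nat.right_le_pair (Nat.unpair j0).1 t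
    set wel := d j + εv k j • uL (τ k j) with hwel
    have hwW : wel ∈ W k := Submodule.subset_span (Or.inr ⟨j, rfl⟩)
    have hnorme : ‖εv k j • uL (τ k j)‖ < ρ/2 := by
      rw [norm_smul, Real.norm_eq_abs, abs_of_pos (hεvpos k j)]
      have hu1 : (0:ℝ) < 1 + ‖uL (τ k j)‖ := by positivity
      have h1 : εv k j * ‖uL (τ k j)‖ ≤ 1/((j:ℝ)+1) := by
        have hb : ‖uL (τ k j)‖ ≤ 1 + ‖uL (τ k j)‖ := by
          linarith [norm_nonneg (uL (τ k j))]
        have hfac : (0:ℝ) ≤ εv k j := (hεvpos k j).le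
        calc εv k j * ‖uL (τ k j)‖ ≤ εv k j * (1 + ‖uL (τ k j)‖) :=
              mul_le_mul_of_nonneg_left hb hfac
          _ = 1/((j:ℝ)+1) := by
              rw [hεv]
              exact div_mul_cancel₀ _ hu1.ne'
      have h2 : 1/((j:ℝ)+1) < ρ/2 := by
        rw [div_lt_div_iff₀ (by positivity) (by norm_num : (0:ℝ) < 2)]
        have h2ρ : 2/ρ < (t:ℝ) := ht
        rw [div_lt_iff₀ hρ] at h2ρ
        nlinarith [htj, hρ]
      linarith
    refine ⟨wel, Metric.mem_ball.2 ?_, hwW⟩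
    have hd1 : dist wel y ≤ dist wel (d j) + dist (d j) y := dist_triangle _ _ _
    have hd2 : dist wel (d j) = ‖εv k j • uL (τ k j)‖ := by
      rw [hwel, dist_eq_norm, add_sub_cancel_left]
    have hd3 : dist (d j) y < ρ/2 := by
      rw [hdj, dist_comm]
      exact hj0
    rw [hd2] at hd1
    linarith
  -- wrap up
  refine ⟨W, fun k => ⟨le_antisymm (hrankle k) (hrankge k), hx_gen k, hsubM k,
    fun l hl => hinter k l (fun h => hl h.symm), hdenseW k⟩⟩
end
end
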